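/- arXiv:2203.11748 — 8 statements merged into one kernel-verified Lean document; each statement's English description precedes it below -/
import Mathlib

section
/- Let (x_n)_{n≥1} and (y_n)_{n≥1} be sequences of reals in (0,1) such that −(2/n)·log x_n → c_1 and −(2/n)·log y_n → c_2 as n → ∞, for some constants c_1, c_2 > 0. For α ∈ (0,1) define N_1(α) as the least integer N such that x_n < α for all n ≥ N, and N_2(α) as the least integer N such that y_n < α for all n ≥ N (both are finite since x_n, y_n → 0). Then N_2(α)/N_1(α) → c_1/c_2 as α → 0 from the right. -/
/-! Put `L = -log α` and `aₙ = -log xₙ`. Then `N₁(α)` is the last-passage time of `aₙ` over the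
level `L`, and the exact slope says `aₙ ~ (c₁/2) n`. If `aₙ < k' n` eventually, then `L < k' N₁`;
if `aₙ > k'' n` eventually, then `k'' (N₁ - 1) < L`. Letting `k', k'' → c₁/2` gives
`N₁(α) ~ 2L/c₁`, likewise `N₂(α) ~ 2L/c₂`, and the ratio tends to `c₁/c₂` as `L → ∞`. -/

open Filter Set Topology

section LastPassage

variable {ι : Type*} {l : Filter ι} {a : ℕ → ℝ} {k : ℝ} {L : ι → ℝ} {N : ι → ℕ}

lemma eventually_lt_mul_of_forall_ge_lt {k' : ℝ} (hk' : k < k')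
    (ha : Tendsto (fun n : ℕ => a n / n) atTop (𝓝 k)) (hL : Tendsto L l atTop)
    (hN : ∀ᶠ i in l, ∀ n ≥ N i, L i < a n) :
    ∀ᶠ i in l, L i < k' * N i := by
  obtain ⟨M, hM⟩ := eventually_atTop.1
    ((ha.eventually (gt_mem_nhds hk')).and (eventually_gt_atTop 0))
  have lt_mul : ∀ n ≥ M, a n < k' * n := fun n hn =>
    (div_lt_iff₀ (Nat.cast_pos.2 (hM n hn).2)).1 (hM n hn).1
  filter_upwards [hN, hL.eventually_ge_atTop (k' * M)] with i hNi hLi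
  rcases le_total M (N i) with hMN | hNM
  · exact (hNi _ le_rfl).trans (lt_mul _ hMN)
  · exact absurd ((hNi M hNM).trans (lt_mul M le_rfl)) hLi.not_gt

lemma eventually_mul_sub_one_lt_of_mem_lowerBounds {k'' : ℝ} (hk''0 : 0 < k'') (hk'' : k'' < k)
    (ha : Tendsto (fun n : ℕ => a n / n) atTop (𝓝 k)) (hL : Tendsto L l atTop)
    (hN : ∀ᶠ i in l, N i ∈ lowerBounds {M : ℕ | ∀ n ≥ M, L i < a n}) :
    ∀ᶠ i in l, k'' * (N i - 1) < L i := by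
  obtain ⟨M, hM⟩ := eventually_atTop.1
    ((ha.eventually (lt_mem_nhds hk'')).and (eventually_gt_atTop 0))
  have mul_lt : ∀ n ≥ M, k'' * n < a n := fun n hn =>
    (lt_div_iff₀ (Nat.cast_pos.2 (hM n hn).2)).1 (hM n hn).1
  filter_upwards [hN, hL.eventually_ge_atTop (k'' * M), hL.eventually_ge_atTop 0]
    with i hNi hLM hL0
  have hmem : max M ⌈L i / k''⌉₊ ∈ {M : ℕ | ∀ n ≥ M, L i < a n} := fun n hn =>
    calc L i = k'' * (L i / k'') := (mul_div_cancel₀ _ hk''0.ne').symm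
      _ ≤ k'' * n := by
        gcongr
        exact (Nat.le_ceil _).trans (Nat.cast_le.2 (le_of_max_le_right hn))
      _ < a n := mul_lt n (le_of_max_le_left hn)
  rcases le_max_iff.1 (hNi hmem) with hNM | hNL
  · calc k'' * (N i - 1) < k'' * M := by gcongr; linarith [(Nat.cast_le (α := ℝ)).2 hNM]
      _ ≤ L i := hLM
  · have hceil := Nat.ceil_lt_add_one (div_nonneg hL0 hk''0.le)
    calc k'' * (N i - 1) < k'' * (L i / k'') := by
          gcongr; linarith [(Nat.cast_le (α := ℝ)).2 hNL]
      _ = L i := mul_div_cancel₀ _ hk''0.ne'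

theorem tendsto_lastPassage_div (hk : 0 < k)
    (ha : Tendsto (fun n : ℕ => a n / n) atTop (𝓝 k)) (hL : Tendsto L l atTop)
    (hN : ∀ᶠ i in l, IsLeast {M : ℕ | ∀ n ≥ M, L i < a n} (N i)) :
    Tendsto (fun i => (N i : ℝ) / L i) l (𝓝 k⁻¹) := by
  refine tendsto_order.2 ⟨fun b hb => ?_, fun b hb => ?_⟩
  · obtain ⟨b', hbb', hb'k⟩ := exists_between (max_lt hb (inv_pos.2 hk))
    have hb'0 : 0 < b' := (le_max_right _ _).trans_lt hbb'
    have hkb' : k < b'⁻¹ := (lt_inv_comm₀ hb'0 hk).1 hb'k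
    filter_upwards [eventually_lt_mul_of_forall_ge_lt hkb' ha hL (hN.mono fun _ h => h.1),
      hL.eventually_gt_atTop 0] with i hi hL0
    calc b < b' := (le_max_left _ _).trans_lt hbb'
      _ < N i / L i := by
        rw [lt_div_iff₀ hL0]
        rwa [inv_mul_eq_div, lt_div_iff₀' hb'0] at hi
  · have hb0 : 0 < b := (inv_pos.2 hk).trans hb
    obtain ⟨k'', hbk'', hk''k⟩ := exists_between ((inv_lt_comm₀ hk hb0).1 hb)
    have hk''0 : 0 < k'' := (inv_pos.2 hb0).trans hbk''
    have hk''b : k''⁻¹ < b := (inv_lt_comm₀ hb0 hk''0).1 hbk''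
    filter_upwards [eventually_mul_sub_one_lt_of_mem_lowerBounds hk''0 hk''k ha hL
        (hN.mono fun _ h => h.2), hL.eventually_gt_atTop 0,
      (tendsto_inv_atTop_zero.comp hL).eventually (gt_mem_nhds (sub_pos.2 hk''b))]
      with i hi hL0 hLb
    rw [Function.comp_apply, inv_lt_iff_one_lt_mul₀ hL0] at hLb
    rw [div_lt_iff₀ hL0]
    calc (N i : ℝ) < L i / k'' + 1 := by
          rw [← sub_lt_iff_lt_add, lt_div_iff₀ hk''0, mul_comm]; exact hi
      _ < L i / k'' + (b - k''⁻¹) * L i := by gcongr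
      _ = b * L i := by ring

end LastPassage

lemma setOf_forall_ge_lt_eq_neg_log {x : ℕ → ℝ} (hx : ∀ n, 0 < x n) {α : ℝ} (hα : 0 < α) :
    {M : ℕ | ∀ n ≥ M, x n < α} = {M : ℕ | ∀ n ≥ M, -Real.log α < -Real.log (x n)} := by
  ext M
  simp only [mem_ofPred_eq, neg_lt_neg_iff, Real.log_lt_log_iff (hx _) hα]

lemma tendsto_threshold_div_neg_log {x : ℕ → ℝ} {c : ℝ} (hc : 0 < c) (hx : ∀ n, 0 < x n)
    (hxc : Tendsto (fun n : ℕ => -(2 / (n : ℝ)) * Real.log (x n)) atTop (𝓝 c))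
    {N : ℝ → ℕ} (hN : ∀ α ∈ Ioo (0 : ℝ) 1, IsLeast {M : ℕ | ∀ n ≥ M, x n < α} (N α)) :
    Tendsto (fun α => (N α : ℝ) / -Real.log α) (𝓝[>] 0) (𝓝 (2 / c)) := by
  have ha : Tendsto (fun n : ℕ => -Real.log (x n) / n) atTop (𝓝 (c / 2)) :=
    (hxc.div_const 2).congr fun n => by ring
  have hL : Tendsto (fun α : ℝ => -Real.log α) (𝓝[>] 0) atTop :=
    tendsto_neg_atBot_atTop.comp Real.tendsto_log_nhdsGT_zero
  rw [← inv_div]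
  refine tendsto_lastPassage_div (half_pos hc) ha hL ?_
  filter_upwards [Ioo_mem_nhdsGT (zero_lt_one' ℝ)] with α hα
  rw [← setOf_forall_ge_lt_eq_neg_log hx hα.1]
  exact hN α hα

/-- Exact Bahadur relative efficiency: if two p-value sequences have exact slopes
`c₁, c₂ > 0`, then the ratio of the smallest sample sizes needed to reach
significance level `α` converges to `c₁ / c₂` as `α → 0⁺`. -/
theorem bahadur_relative_efficiency
    (x y : ℕ → ℝ) (c₁ c₂ : ℝ) (hc₁ : 0 < c₁) (hc₂ : 0 < c₂)
    (hx : ∀ n, x n ∈ Ioo (0 : ℝ) 1) (hy : ∀ n, y n ∈ Ioo (0 : ℝ) 1)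
    (hxc : Tendsto (fun n : ℕ => -(2 / (n : ℝ)) * Real.log (x n)) atTop (nhds c₁))
    (hyc : Tendsto (fun n : ℕ => -(2 / (n : ℝ)) * Real.log (y n)) atTop (nhds c₂))
    (N₁ N₂ : ℝ → ℕ)
    (hN₁ : ∀ α ∈ Ioo (0 : ℝ) 1, IsLeast {N : ℕ | ∀ n ≥ N, x n < α} (N₁ α))
    (hN₂ : ∀ α ∈ Ioo (0 : ℝ) 1, IsLeast {N : ℕ | ∀ n ≥ N, y n < α} (N₂ α)) :
    Tendsto (fun α : ℝ => (N₂ α : ℝ) / (N₁ α : ℝ))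
      (nhdsWithin 0 (Ioi 0)) (nhds (c₁ / c₂)) := by
  have h₁ := tendsto_threshold_div_neg_log hc₁ (fun n => (hx n).1) hxc hN₁
  have h₂ := tendsto_threshold_div_neg_log hc₂ (fun n => (hy n).1) hyc hN₂
  rw [← div_div_div_cancel_left' c₂ c₁ two_ne_zero]
  refine (h₂.div h₁ (by positivity)).congr' ?_
  filter_upwards [Ioo_mem_nhdsGT (zero_lt_one' ℝ)] with α hα
  exact div_div_div_cancel_right₀ (neg_ne_zero.2 (Real.log_neg hα.1 hα.2).ne) _ _
end

section
/- Let a > 0 and r > 0, and let Γ_{a,r} denote the Gamma distribution on ℝ with shape a and rate r. Then log(Γ_{a,r}([t,∞)))/t → −r as t → ∞. In particular, for every integer j ≥ 1, the survival function \bar F_{χ²_{2j}} of the chi-squared distribution with 2j degrees of freedom (Gamma with shape j and rate 1/2) satisfies log(\bar F_{χ²_{2j}}(t))/t → −1/2 as t → ∞. -/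
open MeasureTheory Filter Set ProbabilityTheory

/-! The tail `S(t) = Γ_{a,r}([t,∞))` is squeezed between two functions of the form
`exp (C + B log t - r t)`, and any such function has logarithm `-r t + O(log t)`.
From below, on `[t, t + 1]` the density is at least `c (2t)^{-|a-1|} e^{-r(t+1)}`.
From above, `e^{sx}` times the `Γ(a, r)` density is `(r/(r-s))^a` times the `Γ(a, r - s)`
density, so the exponential Markov inequality gives `S(t) ≤ (r/(r-s))^a e^{-st}` for
`0 ≤ s < r`; the choice `s = r - 1/t` yields `S(t) ≤ (rt)^a e^{1-rt}`. -/

section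

open Real

lemma tendsto_add_mul_log_sub_mul_div_atTop (C B r : ℝ) :
    Tendsto (fun t => (C + B * log t - r * t) / t) atTop (nhds (-r)) := by
  have h : Tendsto (fun t => C * t⁻¹ + B * (log t / t) - r) atTop (nhds (C * 0 + B * 0 - r)) :=
    ((tendsto_inv_atTop_zero.const_mul C).add
      (isLittleO_log_id_atTop.tendsto_div_nhds_zero.const_mul B)).sub_const r
  rw [mul_zero, mul_zero, zero_add, zero_sub] at h
  refine h.congr' ?_
  filter_upwards [eventually_gt_atTop 0] with t ht
  field_simp

theorem tendsto_log_div_of_exp_bounds {f : ℝ → ℝ} {r C₁ B₁ C₂ B₂ : ℝ}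
    (hlow : ∀ᶠ t in atTop, exp (C₁ + B₁ * log t - r * t) ≤ f t)
    (hup : ∀ᶠ t in atTop, f t ≤ exp (C₂ + B₂ * log t - r * t)) :
    Tendsto (fun t => log (f t) / t) atTop (nhds (-r)) := by
  refine tendsto_of_tendsto_of_tendsto_of_le_of_le'
    (tendsto_add_mul_log_sub_mul_div_atTop C₁ B₁ r)
    (tendsto_add_mul_log_sub_mul_div_atTop C₂ B₂ r) ?_ ?_
  · filter_upwards [hlow, eventually_gt_atTop 0] with t hf ht
    gcongr
    exact (le_log_iff_exp_le ((exp_pos _).trans_le hf)).2 hf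
  · filter_upwards [hlow, hup, eventually_gt_atTop 0] with t hf hf' ht
    gcongr
    exact (log_le_iff_le_exp ((exp_pos _).trans_le hf)).2 hf'

namespace ProbabilityTheory

lemma gammaPDFReal_eq_exp {a r x : ℝ} (ha : 0 < a) (hr : 0 < r) (hx : 0 < x) :
    gammaPDFReal a r x = exp (log (r ^ a / Gamma a) + (a - 1) * log x - r * x) := by
  rw [gammaPDFReal, if_pos hx.le, exp_sub, exp_add, exp_log (by positivity), mul_comm (a - 1),
    ← rpow_def_of_pos hx, exp_neg]
  rfl

lemma exp_mul_gammaPDFReal {a r s : ℝ} (hr : 0 ≤ r) (hs : s < r) (x : ℝ) :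
    exp (s * x) * gammaPDFReal a r x = (r / (r - s)) ^ a * gammaPDFReal a (r - s) x := by
  have hrs : 0 < r - s := sub_pos.2 hs
  unfold gammaPDFReal
  split_ifs
  · rw [div_rpow hr hrs.le]
    field_simp
    rw [show -(x * (r - s)) = s * x + -(x * r) by ring, exp_add]
    ring
  · simp

lemma gammaMeasure_Ici_le_ofReal_rpow_mul_exp {a r s : ℝ} (ha : 0 < a) (hs₀ : 0 ≤ s)
    (hs : s < r) (t : ℝ) :
    gammaMeasure a r (Ici t) ≤ ENNReal.ofReal ((r / (r - s)) ^ a * exp (-(s * t))) := by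
  have hr : 0 ≤ r := hs₀.trans hs.le
  calc gammaMeasure a r (Ici t) = ∫⁻ x in Ici t, gammaPDF a r x :=
        withDensity_apply _ measurableSet_Ici
    _ ≤ ∫⁻ x in Ici t, ENNReal.ofReal (exp (-(s * t))) *
          ENNReal.ofReal (exp (s * x) * gammaPDFReal a r x) := by
        refine setLIntegral_mono' measurableSet_Ici fun x (hx : t ≤ x) => ?_
        rw [← ENNReal.ofReal_mul (exp_pos _).le, ← mul_assoc, ← exp_add]
        refine ENNReal.ofReal_le_ofReal (le_mul_of_one_le_left
          (gammaPDFReal_nonneg ha (hs₀.trans_lt hs) x) (one_le_exp ?_))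
        nlinarith
    _ = ENNReal.ofReal (exp (-(s * t))) * ENNReal.ofReal ((r / (r - s)) ^ a) *
          ∫⁻ x in Ici t, gammaPDF a (r - s) x := by
        have hc : (0 : ℝ) ≤ (r / (r - s)) ^ a := by positivity
        simp_rw [exp_mul_gammaPDFReal hr hs, ENNReal.ofReal_mul hc, ← mul_assoc]
        exact lintegral_const_mul _ (measurable_gammaPDFReal a (r - s)).ennreal_ofReal
    _ ≤ ENNReal.ofReal (exp (-(s * t))) * ENNReal.ofReal ((r / (r - s)) ^ a) * 1 := by
        gcongr
        exact (setLIntegral_le_lintegral _ _).trans (lintegral_gammaPDF_eq_one ha (sub_pos.2 hs)).le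
    _ = _ := by rw [mul_one, mul_comm, ← ENNReal.ofReal_mul (by positivity)]

lemma gammaMeasure_Ici_le_ofReal_exp {a r t : ℝ} (ha : 0 < a) (hr : 0 < r) (ht : r⁻¹ < t) :
    gammaMeasure a r (Ici t) ≤ ENNReal.ofReal (exp ((a * log r + 1) + a * log t - r * t)) := by
  have ht₀ : 0 < t := (inv_pos.2 hr).trans ht
  convert gammaMeasure_Ici_le_ofReal_rpow_mul_exp ha (s := r - t⁻¹)
    (sub_nonneg.2 (inv_lt_of_inv_lt₀ hr ht).le) (sub_lt_self r (inv_pos.2 ht₀)) t using 2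
  rw [sub_sub_cancel, div_inv_eq_mul, rpow_def_of_pos (by positivity), log_mul hr.ne' ht₀.ne',
    ← exp_add]
  congr 1
  field_simp
  ring

lemma ofReal_exp_le_gammaMeasure_Ici {a r t : ℝ} (ha : 0 < a) (hr : 0 < r) (ht : 1 ≤ t) :
    ENNReal.ofReal (exp ((log (r ^ a / Gamma a) - |a - 1| * log 2 - r) + -|a - 1| * log t - r * t))
      ≤ gammaMeasure a r (Ici t) := by
  set L := exp ((log (r ^ a / Gamma a) - |a - 1| * log 2 - r) + -|a - 1| * log t - r * t)
  have hL : ∀ x ∈ Icc t (t + 1), L ≤ gammaPDFReal a r x := by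
    rintro x ⟨htx, hxt⟩
    have hx₀ : 0 < x := by linarith
    have hlog₀ : 0 ≤ log x := log_nonneg (by linarith)
    have hlog : log x ≤ log 2 + log t := by
      rw [← log_mul two_ne_zero (by positivity)]
      exact log_le_log hx₀ (by linarith)
    rw [gammaPDFReal_eq_exp ha hr hx₀]
    refine exp_le_exp.2 ?_
    have h₁ := mul_le_mul_of_nonneg_right (neg_abs_le (a - 1)) hlog₀
    have h₂ := mul_le_mul_of_nonneg_left hlog (abs_nonneg (a - 1))
    nlinarith
  calc ENNReal.ofReal L = ∫⁻ _ in Icc t (t + 1), ENNReal.ofReal L := by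
        rw [setLIntegral_const, Real.volume_Icc, add_sub_cancel_left, ENNReal.ofReal_one, mul_one]
    _ ≤ ∫⁻ x in Icc t (t + 1), gammaPDF a r x :=
        setLIntegral_mono' measurableSet_Icc fun x hx => ENNReal.ofReal_le_ofReal (hL x hx)
    _ ≤ ∫⁻ x in Ici t, gammaPDF a r x := lintegral_mono_set Icc_subset_Ici_self
    _ = gammaMeasure a r (Ici t) := (withDensity_apply _ measurableSet_Ici).symm

theorem tendsto_log_gammaMeasure_Ici_div {a r : ℝ} (ha : 0 < a) (hr : 0 < r) :
    Tendsto (fun t => log (gammaMeasure a r (Ici t)).toReal / t) atTop (nhds (-r)) := by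
  have := isProbabilityMeasure_gammaMeasure ha hr
  exact tendsto_log_div_of_exp_bounds
    ((eventually_ge_atTop 1).mono fun t ht =>
      (ENNReal.ofReal_le_iff_le_toReal (measure_ne_top _ _)).1
        (ofReal_exp_le_gammaMeasure_Ici ha hr ht))
    ((eventually_gt_atTop r⁻¹).mono fun t ht =>
      ENNReal.toReal_le_of_le_ofReal (exp_pos _).le (gammaMeasure_Ici_le_ofReal_exp ha hr ht))

end ProbabilityTheory

end

/-- Tail log-asymptotic of the Gamma distribution: for shape `a > 0` and rate `r > 0`,
`log Γ_{a,r}([t,∞)) / t → -r` as `t → ∞`; in particular, the survival function of the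
chi-squared distribution with `2j` degrees of freedom (Gamma with shape `j`, rate `1/2`)
satisfies `log F̄(t) / t → -1/2`. -/
theorem gamma_tail_log_asymptotic (a r : ℝ) (ha : 0 < a) (hr : 0 < r) :
    (Tendsto (fun t : ℝ => Real.log ((gammaMeasure a r (Ici t)).toReal) / t)
      atTop (nhds (-r))) ∧
    ∀ j : ℕ, 1 ≤ j →
      Tendsto
        (fun t : ℝ => Real.log ((gammaMeasure (j : ℝ) (1 / 2) (Ici t)).toReal) / t)
        atTop (nhds (-(1 / 2))) :=
  ⟨tendsto_log_gammaMeasure_Ici_div ha hr, fun _ hj =>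
    tendsto_log_gammaMeasure_Ici_div (by exact_mod_cast hj) one_half_pos⟩
end

section
/- Fix an integer K ≥ 1 and an integer ℓ with 1 ≤ ℓ ≤ K. Fix reals λ_1,…,λ_K > 0 and c_1,…,c_ℓ > 0, and set c_i = 0 for ℓ < i ≤ K. Fix sequences n_1,…,n_K : ℕ → ℕ with n_i(n)/n → λ_i as n → ∞. On a probability space, for each n let p_1^{(n)},…,p_K^{(n)} be random variables with values in (0,1) such that: (i) for each 1 ≤ i ≤ ℓ, −(2/n_i(n))·log p_i^{(n)} → c_i almost surely as n → ∞; (ii) for each ℓ < i ≤ K and every n, p_i^{(n)} is uniformly distributed on (0,1). Define the Fisher combined p-value q_n = \bar F_{χ²_{2K}}(∑_{i=1}^K −2·log p_i^{(n)}). Then −(2/n)·log q_n → ∑_{i=1}^ℓ λ_i·c_i almost surely as n → ∞; i.e., Fisher's method attains the maximum attainable exact slope ∑_{i=1}^ℓ λ_i c_i (it is asymptotically Bahadur optimal). -/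
/-!
Writing `T_n = ∑ i, -2 log p_i` for Fisher's statistic, each non-null component contributes
`-2 log p_i ≈ n λ_i c_i`, while a uniform `p_i` has `-log p_i = o(n)` almost surely by
Borel–Cantelli (`P(p_i ≤ qⁿ) = qⁿ` is summable), so `T_n / n → ∑ λ_i c_i > 0`.
The `χ²_{2K}` tail has exponential rate `1/2`: `-log F̄(t) / t → 1/2`, from the density lower bound
on `[t, t + 1]` and an exponential-tilting (Chernoff) upper bound. Composing the two limits gives
`-(2/n) log q_n → ∑ λ_i c_i`.
-/

open MeasureTheory Filter Set ProbabilityTheory Real Topology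

theorem Filter.Tendsto.div_chain {α : Type*} {l : Filter α} {f g h : α → ℝ} {a b : ℝ}
    (hfg : Tendsto (fun x => f x / g x) l (𝓝 a)) (hgh : Tendsto (fun x => g x / h x) l (𝓝 b))
    (hb : b ≠ 0) : Tendsto (fun x => f x / h x) l (𝓝 (a * b)) :=
  (hfg.mul hgh).congr' <| by
    filter_upwards [hgh.eventually_ne hb] with x hx
    exact div_mul_div_cancel₀ (div_ne_zero_iff.1 hx).1

section ValidPValue

universe u

variable {Ω : Type u} [MeasurableSpace Ω] {μ : Measure Ω}

theorem measure_setOf_le_le_ofReal_of_map_eq_uniform {X : Ω → ℝ}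
    (hX : μ.map X = volume.restrict (Ioo 0 1)) (x : ℝ) :
    μ {ω | X ω ≤ x} ≤ ENNReal.ofReal x := by
  have hXm : AEMeasurable X μ := by
    by_contra h
    have := congrArg (· univ) (hX.symm.trans (Measure.map_of_not_aemeasurable h))
    simp at this
  calc μ {ω | X ω ≤ x} ≤ μ.map X (Iic x) := Measure.le_map_apply hXm _
    _ = volume (Iic x ∩ Ioo 0 1) := by rw [hX, Measure.restrict_apply measurableSet_Iic]
    _ ≤ volume (Ioc 0 x) := measure_mono fun y ⟨hyx, hy0, _⟩ => ⟨hy0, hyx⟩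
    _ = ENNReal.ofReal x := by rw [volume_Ioc, sub_zero]

theorem ae_eventually_pow_lt_of_measure_le {X : ℕ → Ω → ℝ}
    (hX : ∀ n (x : ℝ), μ {ω | X n ω ≤ x} ≤ ENNReal.ofReal x) {q : ℝ} (hq0 : 0 ≤ q) (hq1 : q < 1) :
    ∀ᵐ ω ∂μ, ∀ᶠ n in atTop, q ^ n < X n ω := by
  have hsum : ∑' n, μ {ω | X n ω ≤ q ^ n} ≠ ⊤ := by
    refine ne_top_of_le_ne_top ?_ (ENNReal.tsum_le_tsum fun n => hX n (q ^ n))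
    simp_rw [ENNReal.ofReal_pow hq0, ENNReal.tsum_geometric]
    exact ENNReal.inv_ne_top.2 (tsub_pos_of_lt (ENNReal.ofReal_lt_one.2 hq1)).ne'
  filter_upwards [ae_eventually_notMem hsum] with ω hω
  filter_upwards [hω] with n hn
  exact not_le.1 hn

theorem ae_tendsto_neg_log_div_natCast_of_measure_le {X : ℕ → Ω → ℝ} (hX1 : ∀ n ω, X n ω ≤ 1)
    (hX : ∀ n (x : ℝ), μ {ω | X n ω ≤ x} ≤ ENNReal.ofReal x) :
    ∀ᵐ ω ∂μ, Tendsto (fun n : ℕ => -log (X n ω) / n) atTop (𝓝 0) := by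
  have hk : ∀ k : ℕ, ∀ᵐ ω ∂μ, ∀ᶠ n in atTop, exp (-(1 / (k + 1))) ^ n < X n ω := fun k =>
    ae_eventually_pow_lt_of_measure_le hX (exp_pos _).le (exp_lt_one_iff.2 (by simp; positivity))
  filter_upwards [ae_all_iff.2 hk] with ω hω
  have hpos : ∀ᶠ n in atTop, 0 < X n ω := by
    filter_upwards [hω 0] with n hn
    exact (pow_pos (exp_pos _) n).trans hn
  rw [tendsto_order]
  constructor
  · intro b hb
    filter_upwards [hpos] with n hn
    exact hb.trans_le (div_nonneg (neg_nonneg.2 (log_nonpos hn.le (hX1 n ω))) n.cast_nonneg)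
  · intro b hb
    obtain ⟨k, hk⟩ := exists_nat_one_div_lt hb
    filter_upwards [hω k, eventually_gt_atTop 0] with n hn hn0
    have hlog : -(n / (k + 1) : ℝ) < log (X n ω) := by
      calc -(n / (k + 1) : ℝ) = log (exp (-(1 / (k + 1))) ^ n) := by
            rw [← exp_nat_mul, log_exp]; ring
        _ < log (X n ω) := log_lt_log (by positivity) hn
    calc -log (X n ω) / n < (n / (k + 1) : ℝ) / n := by gcongr; linarith
      _ = 1 / (k + 1) := by field_simp
      _ < b := hk

namespace ProbabilityTheory

variable {a r : ℝ}

theorem gammaMeasure_real_Ici_le_exp (ha : 0 < a) {θ : ℝ} (hθ : 0 ≤ θ) (hθr : θ < r) (t : ℝ) :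
    (gammaMeasure a r).real (Ici t) ≤ (r / (r - θ)) ^ a * exp (-(θ * t)) := by
  have hrθ : 0 < r - θ := by linarith
  set C := (r / (r - θ)) ^ a * exp (-(θ * t))
  have hC : 0 < C := mul_pos (rpow_pos_of_pos (div_pos (by linarith) hrθ) a) (exp_pos _)
  -- exponential tilting turns the rate-`r` density into the rate-`(r - θ)` one
  have htilt : ∀ x, ENNReal.ofReal (exp (θ * (x - t))) * gammaPDF a r x =
      ENNReal.ofReal C * gammaPDF a (r - θ) x := by
    intro x
    rcases lt_or_ge x 0 with hx | hx
    · simp [gammaPDF_of_neg hx]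
    rw [gammaPDF_of_nonneg hx, gammaPDF_of_nonneg hx, ← ENNReal.ofReal_mul (by positivity),
      ← ENNReal.ofReal_mul (by positivity)]
    congr 1
    have hexp : exp (θ * (x - t)) * exp (-(r * x)) = exp (-(θ * t)) * exp (-((r - θ) * x)) := by
      rw [← exp_add, ← exp_add]; ring_nf
    calc exp (θ * (x - t)) * (r ^ a / Gamma a * x ^ (a - 1) * exp (-(r * x)))
        = r ^ a / Gamma a * x ^ (a - 1) * (exp (θ * (x - t)) * exp (-(r * x))) := by ring
      _ = r ^ a / Gamma a * x ^ (a - 1) * (exp (-(θ * t)) * exp (-((r - θ) * x))) := by rw [hexp]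
      _ = C * ((r - θ) ^ a / Gamma a * x ^ (a - 1) * exp (-((r - θ) * x))) := by
        simp only [C]
        rw [div_rpow (by linarith) hrθ.le]
        field_simp
  have hle : gammaMeasure a r (Ici t) ≤ ENNReal.ofReal C :=
    calc gammaMeasure a r (Ici t) = ∫⁻ x in Ici t, gammaPDF a r x := by
          rw [gammaMeasure, withDensity_apply _ measurableSet_Ici]
      _ ≤ ∫⁻ x in Ici t, ENNReal.ofReal (exp (θ * (x - t))) * gammaPDF a r x :=
          setLIntegral_mono' measurableSet_Ici fun x hx => le_mul_of_one_le_left' <|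
            ENNReal.one_le_ofReal.2 <| one_le_exp <| mul_nonneg hθ <| sub_nonneg.2 hx
      _ ≤ ∫⁻ x, ENNReal.ofReal (exp (θ * (x - t))) * gammaPDF a r x := setLIntegral_le_lintegral _ _
      _ = ENNReal.ofReal C := by
          simp_rw [htilt]
          rw [lintegral_const_mul' _ _ ENNReal.ofReal_ne_top,
            lintegral_gammaPDF_eq_one ha hrθ, mul_one]
  exact ENNReal.toReal_le_of_le_ofReal hC.le hle

theorem exp_le_gammaMeasure_real_Ici (ha : 1 ≤ a) (hr : 0 < r) {t : ℝ} (ht : 1 ≤ t) :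
    r ^ a / Gamma a * exp (-(r * (t + 1))) ≤ (gammaMeasure a r).real (Ici t) := by
  have := isProbabilityMeasure_gammaMeasure (by linarith : 0 < a) hr
  set B := r ^ a / Gamma a * exp (-(r * (t + 1)))
  have hdens : ∀ x ∈ Icc t (t + 1), ENNReal.ofReal B ≤ gammaPDF a r x := by
    intro x hx
    have hx0 : 0 ≤ x := by linarith [hx.1]
    rw [gammaPDF_of_nonneg hx0]
    refine ENNReal.ofReal_le_ofReal ?_
    calc B = r ^ a / Gamma a * 1 * exp (-(r * (t + 1))) := by rw [mul_one]
      _ ≤ r ^ a / Gamma a * x ^ (a - 1) * exp (-(r * x)) := by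
        have hΓ := Gamma_pos_of_pos (by linarith : 0 < a)
        gcongr
        · exact one_le_rpow (ht.trans hx.1) (sub_nonneg.2 ha)
        · exact hx.2
  rw [measureReal_def, ← ENNReal.ofReal_le_iff_le_toReal (measure_ne_top _ _)]
  calc ENNReal.ofReal B = ∫⁻ _ in Icc t (t + 1), ENNReal.ofReal B := by simp
    _ ≤ ∫⁻ x in Icc t (t + 1), gammaPDF a r x := setLIntegral_mono' measurableSet_Icc hdens
    _ ≤ ∫⁻ x in Ici t, gammaPDF a r x := lintegral_mono_set Icc_subset_Ici_self
    _ = gammaMeasure a r (Ici t) := by rw [gammaMeasure, withDensity_apply _ measurableSet_Ici]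

theorem tendsto_neg_log_gammaMeasure_real_Ici_div (ha : 1 ≤ a) (hr : 0 < r) :
    Tendsto (fun t => -log ((gammaMeasure a r).real (Ici t)) / t) atTop (𝓝 r) := by
  set B := r ^ a / Gamma a
  have hB : 0 < B := div_pos (rpow_pos_of_pos hr a) (Gamma_pos_of_pos (by linarith))
  have hlower : ∀ t, 1 ≤ t → log B - r * (t + 1) ≤ log ((gammaMeasure a r).real (Ici t)) := by
    intro t ht
    rw [sub_eq_add_neg, ← log_exp (-(r * (t + 1))), ← log_mul hB.ne' (exp_pos _).ne']
    exact log_le_log (by positivity) (exp_le_gammaMeasure_real_Ici ha hr ht)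
  rw [tendsto_order]
  constructor
  · intro b hb
    obtain ⟨θ, hbθ, hθr⟩ := exists_between (max_lt hb hr)
    set C := (r / (r - θ)) ^ a
    have hC : 0 < C := rpow_pos_of_pos (div_pos hr (by linarith)) a
    have hlim : Tendsto (fun t => θ - log C / t) atTop (𝓝 θ) := by
      simpa using (tendsto_const_nhds (x := θ)).sub
        ((tendsto_const_nhds (x := log C)).div_atTop tendsto_id)
    filter_upwards [hlim.eventually (lt_mem_nhds (le_max_left b 0 |>.trans_lt hbθ)),
      eventually_ge_atTop 1] with t hlt ht
    have hupper : log ((gammaMeasure a r).real (Ici t)) ≤ log C - θ * t := by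
      rw [sub_eq_add_neg, ← log_exp (-(θ * t)), ← log_mul hC.ne' (exp_pos _).ne']
      exact log_le_log ((by positivity : 0 < B * exp (-(r * (t + 1)))).trans_le
        (exp_le_gammaMeasure_real_Ici ha hr ht))
        (gammaMeasure_real_Ici_le_exp (by linarith) (le_max_right b 0 |>.trans hbθ.le) hθr t)
    calc b < θ - log C / t := hlt
      _ = -(log C - θ * t) / t := by field_simp; ring
      _ ≤ _ := by gcongr
  · intro b hb
    have hlim : Tendsto (fun t => r + (r - log B) / t) atTop (𝓝 r) := by
      simpa using (tendsto_const_nhds (x := r)).add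
        ((tendsto_const_nhds (x := r - log B)).div_atTop tendsto_id)
    filter_upwards [hlim.eventually (gt_mem_nhds hb), eventually_ge_atTop 1] with t hlt ht
    calc -log ((gammaMeasure a r).real (Ici t)) / t ≤ -(log B - r * (t + 1)) / t := by
          gcongr; exact hlower t ht
      _ = r + (r - log B) / t := by field_simp; ring
      _ < b := hlt

theorem tendsto_neg_log_gammaMeasure_real_Ici_comp_div (ha : 1 ≤ a) (hr : 0 < r) {u : ℕ → ℝ}
    {s : ℝ} (hu : Tendsto (fun n => u n / n) atTop (𝓝 s)) (hs : 0 < s) :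
    Tendsto (fun n : ℕ => -log ((gammaMeasure a r).real (Ici (u n))) / n) atTop (𝓝 (r * s)) :=
  ((tendsto_neg_log_gammaMeasure_real_Ici_div ha hr).comp
    (Tendsto.num tendsto_natCast_atTop_atTop hs hu)).div_chain hu hs.ne'

end ProbabilityTheory

theorem fisher_is_ABO_general
    {K : ℕ} (hK : 1 ≤ K) (ℓ : ℕ) (hℓ : 1 ≤ ℓ)
    (lam c : Fin K → ℝ)
    (hlam : ∀ i, 0 < lam i)
    (hcpos : ∀ i : Fin K, (i : ℕ) < ℓ → 0 < c i)
    (hcnull : ∀ i : Fin K, ℓ ≤ (i : ℕ) → c i = 0)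
    (nseq : Fin K → ℕ → ℕ)
    (hn : ∀ i, Tendsto (fun n : ℕ => (nseq i n : ℝ) / (n : ℝ)) atTop (nhds (lam i)))
    {Ω : Type*} [MeasurableSpace Ω] (μ : Measure Ω)
    (p : ℕ → Fin K → Ω → ℝ)
    (hval : ∀ n i ω, p n i ω ∈ Ioo (0 : ℝ) 1)
    (hslope : ∀ i : Fin K, (i : ℕ) < ℓ →
      ∀ᵐ ω ∂μ, Tendsto (fun n : ℕ => -(2 / (nseq i n : ℝ)) * Real.log (p n i ω))
        atTop (nhds (c i)))
    (hnull : ∀ i : Fin K, ℓ ≤ (i : ℕ) →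
      ∀ n, Measure.map (p n i) μ = volume.restrict (Ioo (0 : ℝ) 1))
    -- the Fisher combined p-value
    (q : ℕ → Ω → ℝ)
    (hq : ∀ n ω, q n ω =
      (gammaMeasure (K : ℝ) (1 / 2)
        (Ici (∑ i : Fin K, -2 * Real.log (p n i ω)))).toReal) :
    ∀ᵐ ω ∂μ, Tendsto (fun n : ℕ => -(2 / (n : ℝ)) * Real.log (q n ω))
      atTop (nhds (∑ i : Fin K, lam i * c i)) := by
  have hs : 0 < ∑ i : Fin K, lam i * c i := by
    refine Finset.sum_pos' (fun i _ => ?_) ⟨⟨0, hK⟩, Finset.mem_univ _, mul_pos (hlam _) (hcpos _ hℓ)⟩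
    rcases lt_or_ge (i : ℕ) ℓ with h | h
    · exact (mul_pos (hlam i) (hcpos i h)).le
    · rw [hcnull i h, mul_zero]
  have hcomp : ∀ i, ∀ᵐ ω ∂μ,
      Tendsto (fun n : ℕ => -2 * log (p n i ω) / n) atTop (𝓝 (lam i * c i)) := by
    intro i
    rcases lt_or_ge (i : ℕ) ℓ with h | h
    · filter_upwards [hslope i h] with ω hω
      have hω' := hω.congr (f₂ := fun n => -2 * log (p n i ω) / nseq i n) fun n => by ring
      simpa only [mul_comm (lam i)] using hω'.div_chain (hn i) (hlam i).ne'
    · filter_upwards [ae_tendsto_neg_log_div_natCast_of_measure_le (fun n ω => (hval n i ω).2.le)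
        fun n => measure_setOf_le_le_ofReal_of_map_eq_uniform (hnull i h n)] with ω hω
      rw [hcnull i h, mul_zero, ← mul_zero (2 : ℝ)]
      exact (hω.const_mul 2).congr fun n => by ring
  filter_upwards [ae_all_iff.2 hcomp] with ω hω
  have hsum : Tendsto (fun n : ℕ => (∑ i, -2 * log (p n i ω)) / n) atTop
      (𝓝 (∑ i, lam i * c i)) := by
    simpa only [Finset.sum_div] using tendsto_finsetSum _ fun i _ => hω i
  have hK' : (1 : ℝ) ≤ K := by exact_mod_cast hK
  have hlim := (tendsto_neg_log_gammaMeasure_real_Ici_comp_div hK' one_half_pos hsum hs).const_mul 2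
  rw [← mul_assoc, mul_one_div_cancel two_ne_zero, one_mul] at hlim
  exact hlim.congr fun n => by rw [hq, measureReal_def]; ring

/-- Fisher's method is asymptotically Bahadur optimal: its combined p-value has
exact slope `∑ i, λ i * c i` (the maximum attainable exact slope, since `c i = 0`
for the null components). -/
theorem fisher_is_ABO
    {K : ℕ} (hK : 1 ≤ K) (ℓ : ℕ) (hℓ : 1 ≤ ℓ) (hℓK : ℓ ≤ K)
    (lam c : Fin K → ℝ)
    (hlam : ∀ i, 0 < lam i)
    (hcpos : ∀ i : Fin K, (i : ℕ) < ℓ → 0 < c i)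
    (hcnull : ∀ i : Fin K, ℓ ≤ (i : ℕ) → c i = 0)
    (nseq : Fin K → ℕ → ℕ)
    (hn : ∀ i, Tendsto (fun n : ℕ => (nseq i n : ℝ) / (n : ℝ)) atTop (nhds (lam i)))
    {Ω : Type*} [MeasurableSpace Ω] (μ : Measure Ω) [IsProbabilityMeasure μ]
    (p : ℕ → Fin K → Ω → ℝ)
    (hmeas : ∀ n i, Measurable (p n i))
    (hval : ∀ n i ω, p n i ω ∈ Ioo (0 : ℝ) 1)
    (hslope : ∀ i : Fin K, (i : ℕ) < ℓ →
      ∀ᵐ ω ∂μ, Tendsto (fun n : ℕ => -(2 / (nseq i n : ℝ)) * Real.log (p n i ω))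
        atTop (nhds (c i)))
    (hnull : ∀ i : Fin K, ℓ ≤ (i : ℕ) →
      ∀ n, Measure.map (p n i) μ = volume.restrict (Ioo (0 : ℝ) 1))
    -- the Fisher combined p-value
    (q : ℕ → Ω → ℝ)
    (hq : ∀ n ω, q n ω =
      (gammaMeasure (K : ℝ) (1 / 2)
        (Ici (∑ i : Fin K, -2 * Real.log (p n i ω)))).toReal) :
    ∀ᵐ ω ∂μ, Tendsto (fun n : ℕ => -(2 / (n : ℝ)) * Real.log (q n ω))
      atTop (nhds (∑ i : Fin K, lam i * c i)) :=
  fisher_is_ABO_general hK ℓ hℓ lam c hlam hcpos hcnull nseq hn μ p hval hslope hnull q hq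
end ValidPValue
end

section
/- Fix an integer K ≥ 1 and an integer ℓ with 1 ≤ ℓ ≤ K. Fix reals λ_1,…,λ_K > 0 and c_1,…,c_ℓ > 0, and set c_i = 0 for ℓ < i ≤ K. Fix sequences n_1,…,n_K : ℕ → ℕ with n_i(n)/n → λ_i as n → ∞. On a probability space, for each n let p_1^{(n)},…,p_K^{(n)} be random variables with values in (0,1) such that: (i) for each 1 ≤ i ≤ ℓ, −(2/n_i(n))·log p_i^{(n)} → c_i almost surely as n → ∞; (ii) for each ℓ < i ≤ K and every n, p_i^{(n)} is uniformly distributed on (0,1). Let Φ be the cumulative distribution function of the standard Gaussian distribution on ℝ and let Q : (0,1) → ℝ be a function satisfying Φ(Q(u)) = u for all u ∈ (0,1). Define the Stouffer statistic T_n = ∑_{i=1}^K Q(1 − p_i^{(n)}) and its combined p-value r_n = 1 − Φ(T_n/√K). Then −(2/n)·log r_n → (1/K)·(∑_{i=1}^ℓ (λ_i·c_i)^{1/2})² almost surely as n → ∞; in particular, when ℓ ≥ 2, Stouffer's method is not asymptotically Bahadur optimal since (1/K)(∑_{i=1}^ℓ √(λ_i c_i))² < ∑_{i=1}^ℓ λ_i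 c_i. -/
/-!
The Gaussian tail satisfies `-2 log (1 - Φ t) ~ t²` as `t → ∞` (Chernoff's bound from above, the
density on `[t, t + 1]` from below). Hence a p-value has exact slope `a > 0` along `n` exactly when
its normal score `Q (1 - p)` grows like `√(a n)`. Under the null the normal score is standard
Gaussian, so its tails are summable along `ε √n` and Borel–Cantelli gives `Q (1 - p) = o(√n)`
almost surely. Summing the scores, `T_n / √(K n) → (∑ √(λᵢ cᵢ)) / √K`, and the tail asymptotics
turn this back into the slope of `r_n`.
-/

open MeasureTheory Filter Set ProbabilityTheory Topology Real

local notation "Φ" => cdf (gaussianReal 0 1)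

lemma one_sub_cdf_gaussianReal_eq (x : ℝ) : 1 - Φ x = (gaussianReal 0 1).real (Ioi x) := by
  rw [cdf_eq_real, ← probReal_compl_eq_one_sub measurableSet_Iic, compl_Iic]

lemma hasSubgaussianMGF_fun_id_gaussianReal (v : NNReal) :
    HasSubgaussianMGF (fun x => x) v (gaussianReal 0 v) where
  integrable_exp_mul t := integrable_exp_mul_gaussianReal t
  mgf_le t := by simp [mgf_fun_id_gaussianReal]

lemma one_sub_cdf_gaussianReal_le {t : ℝ} (ht : 0 ≤ t) : 1 - Φ t ≤ exp (-t ^ 2 / 2) := by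
  have h := (hasSubgaussianMGF_fun_id_gaussianReal 1).measure_ge_le ht
  rw [one_sub_cdf_gaussianReal_eq]
  exact (measureReal_mono (s₂ := {x | t ≤ x}) fun x (hx : t < x) => hx.le).trans
    (by simpa using h)

lemma cdf_gaussianReal_neg_le {t : ℝ} (ht : 0 ≤ t) : Φ (-t) ≤ exp (-t ^ 2 / 2) := by
  have h := (hasSubgaussianMGF_fun_id_gaussianReal 1).neg.measure_ge_le ht
  rw [cdf_eq_real]
  convert h using 2
  · ext x; simp [le_neg]
  · simp

lemma gaussianPDFReal_add_one_le_one_sub_cdf {t : ℝ} (ht : 0 ≤ t) :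
    gaussianPDFReal 0 1 (t + 1) ≤ 1 - Φ t := by
  have hint : IntegrableOn (gaussianPDFReal 0 1) (Ioc t (t + 1)) :=
    (integrable_gaussianPDFReal 0 1).integrableOn
  calc gaussianPDFReal 0 1 (t + 1)
      = gaussianPDFReal 0 1 (t + 1) * volume.real (Ioc t (t + 1)) := by simp
    _ ≤ ∫ u in Ioc t (t + 1), gaussianPDFReal 0 1 u := by
        refine setIntegral_ge_of_const_le_real measurableSet_Ioc (by simp) (fun u hu => ?_) hint
        simp only [gaussianPDFReal, NNReal.coe_one, mul_one, sub_zero]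
        gcongr
        exacts [ht.trans hu.1.le, hu.2]
    _ = (gaussianReal 0 1).real (Ioc t (t + 1)) := by
        rw [measureReal_def, gaussianReal_apply_eq_integral 0 one_ne_zero,
          ENNReal.toReal_ofReal (setIntegral_nonneg measurableSet_Ioc
            fun u _ => gaussianPDFReal_nonneg 0 1 u)]
    _ ≤ 1 - Φ t := by
        rw [one_sub_cdf_gaussianReal_eq]
        exact measureReal_mono Ioc_subset_Ioi_self

lemma one_sub_cdf_gaussianReal_pos (x : ℝ) : 0 < 1 - Φ x :=
  calc 0 < gaussianPDFReal 0 1 (max x 0 + 1) := gaussianPDFReal_pos 0 1 _ one_ne_zero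
    _ ≤ 1 - Φ (max x 0) := gaussianPDFReal_add_one_le_one_sub_cdf (le_max_right x 0)
    _ ≤ 1 - Φ x := sub_le_sub_left (monotone_cdf _ (le_max_left x 0)) 1

lemma tendsto_neg_two_mul_log_one_sub_cdf_div_sq :
    Tendsto (fun t => -2 * log (1 - Φ t) / t ^ 2) atTop (𝓝 1) := by
  set L := log (√(2 * π))
  -- `-2 log` of the density at `t + 1`, divided by `t²`
  have hbound : Tendsto (fun t : ℝ => 2 * L * t⁻¹ ^ 2 + (1 + t⁻¹) ^ 2) atTop (𝓝 1) := by
    simpa using ((tendsto_inv_atTop_zero.pow 2).const_mul (2 * L)).add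
      ((tendsto_inv_atTop_zero.const_add 1).pow 2)
  refine tendsto_of_tendsto_of_tendsto_of_le_of_le' tendsto_const_nhds hbound ?_ ?_
  all_goals filter_upwards [eventually_gt_atTop 0] with t ht
  · have hlog : log (1 - Φ t) ≤ -t ^ 2 / 2 :=
      (log_le_iff_le_exp (one_sub_cdf_gaussianReal_pos t)).2
        (one_sub_cdf_gaussianReal_le ht.le)
    rw [le_div_iff₀ (by positivity)]
    linarith
  · have hlog : -L - (t + 1) ^ 2 / 2 ≤ log (1 - Φ t) := by
      have h := log_le_log (gaussianPDFReal_pos 0 1 (t + 1) one_ne_zero)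
        (gaussianPDFReal_add_one_le_one_sub_cdf ht.le)
      rw [gaussianPDFReal, log_mul (by positivity) (exp_pos _).ne', log_exp, log_inv] at h
      simpa [L, sub_eq_add_neg, neg_div] using h
    rw [div_le_iff₀ (by positivity)]
    field_simp
    nlinarith

lemma tendsto_neg_two_div_mul_log_one_sub_cdf {y : ℕ → ℝ} {s : ℝ} (hs : 0 < s)
    (hy : Tendsto (fun n => y n / √(n : ℝ)) atTop (𝓝 s)) :
    Tendsto (fun n : ℕ => -(2 / (n : ℝ)) * log (1 - Φ (y n))) atTop (𝓝 (s ^ 2)) := by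
  have hy_top : Tendsto y atTop atTop := by
    refine ((tendsto_sqrt_atTop.comp tendsto_natCast_atTop_atTop).atTop_mul_pos hs hy).congr' ?_
    filter_upwards [eventually_gt_atTop 0] with n hn
    simp only [Function.comp_apply]
    field_simp
  have hlim := (tendsto_neg_two_mul_log_one_sub_cdf_div_sq.comp hy_top).mul (hy.pow 2)
  rw [one_mul] at hlim
  refine hlim.congr' ?_
  filter_upwards [eventually_gt_atTop 0, hy_top.eventually_gt_atTop 0] with n hn hyn
  simp only [Function.comp_apply, div_pow, sq_sqrt (Nat.cast_nonneg n)]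
  field_simp

lemma tendsto_div_sqrt_of_tendsto_neg_two_div_mul_log {x : ℕ → ℝ} {a : ℝ} (ha : 0 < a)
    (h : Tendsto (fun n : ℕ => -(2 / (n : ℝ)) * log (1 - Φ (x n))) atTop (𝓝 a)) :
    Tendsto (fun n => x n / √(n : ℝ)) atTop (𝓝 (√a)) := by
  have hlog : Tendsto (fun n => -log (1 - Φ (x n))) atTop atTop := by
    refine ((tendsto_natCast_atTop_atTop.atTop_div_const two_pos).atTop_mul_pos ha h).congr' ?_
    filter_upwards [eventually_gt_atTop 0] with n hn
    field_simp
  have hx : Tendsto x atTop atTop := by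
    refine tendsto_atTop.2 fun M => ?_
    filter_upwards [hlog.eventually_gt_atTop (-log (1 - Φ M))] with n hn
    by_contra! hxM
    have hmono : 1 - Φ M ≤ 1 - Φ (x n) := sub_le_sub_left (monotone_cdf _ hxM.le) 1
    linarith [log_le_log (one_sub_cdf_gaussianReal_pos M) hmono]
  have hsq : Tendsto (fun n : ℕ => x n ^ 2 / n) atTop (𝓝 a) := by
    have hlim := h.div (tendsto_neg_two_mul_log_one_sub_cdf_div_sq.comp hx) one_ne_zero
    rw [div_one] at hlim
    refine hlim.congr' ?_
    filter_upwards [eventually_gt_atTop 0, hx.eventually_gt_atTop 0,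
      hlog.eventually_gt_atTop 0] with n hn hxn hlogn
    have : log (1 - Φ (x n)) ≠ 0 := by linarith
    simp only [Pi.div_apply, Function.comp_apply]
    field_simp
  refine hsq.sqrt.congr' ?_
  filter_upwards [hx.eventually_ge_atTop 0] with n hxn
  rw [sqrt_div (sq_nonneg _), sqrt_sq hxn]

section Uniform

variable {Ω : Type*} [MeasurableSpace Ω] {μ : Measure Ω} {X : Ω → ℝ}

lemma measure_preimage_of_map_eq_uniform (hX : μ.map X = volume.restrict (Ioo 0 1))
    {s : Set ℝ} (hs : MeasurableSet s) : μ (X ⁻¹' s) = volume (s ∩ Ioo 0 1) := by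
  have hX_meas : AEMeasurable X μ := .of_map_ne_zero (by simp [hX])
  rw [← Measure.map_apply_of_aemeasurable hX_meas hs, hX, Measure.restrict_apply hs]

lemma measure_le_le_of_map_eq_uniform (hX : μ.map X = volume.restrict (Ioo 0 1)) (a : ℝ) :
    μ {ω | X ω ≤ a} ≤ ENNReal.ofReal a := by
  calc μ (X ⁻¹' Iic a) = volume (Iic a ∩ Ioo 0 1) :=
        measure_preimage_of_map_eq_uniform hX measurableSet_Iic
    _ ≤ volume (Ioc 0 a) := measure_mono fun x hx => ⟨hx.2.1, hx.1⟩
    _ = ENNReal.ofReal a := by rw [volume_Ioc, sub_zero]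

lemma measure_ge_le_of_map_eq_uniform (hX : μ.map X = volume.restrict (Ioo 0 1)) (b : ℝ) :
    μ {ω | b ≤ X ω} ≤ ENNReal.ofReal (1 - b) := by
  calc μ (X ⁻¹' Ici b) = volume (Ici b ∩ Ioo 0 1) :=
        measure_preimage_of_map_eq_uniform hX measurableSet_Ici
    _ ≤ volume (Ico b 1) := measure_mono fun x hx => ⟨hx.1, hx.2.2⟩
    _ = ENNReal.ofReal (1 - b) := volume_Ico

lemma measure_le_abs_quantile_le (hX : μ.map X = volume.restrict (Ioo 0 1))
    (hX_mem : ∀ ω, X ω ∈ Ioo (0 : ℝ) 1)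
    {Q : ℝ → ℝ} (hQ : ∀ u ∈ Ioo (0 : ℝ) 1, Φ (Q u) = u) {t : ℝ} (ht : 0 ≤ t) :
    μ {ω | t ≤ |Q (1 - X ω)|} ≤ ENNReal.ofReal (2 * exp (-t ^ 2 / 2)) := by
  have hΦQ (ω : Ω) : Φ (Q (1 - X ω)) = 1 - X ω :=
    hQ _ ⟨by linarith [(hX_mem ω).2], by linarith [(hX_mem ω).1]⟩
  have hsub : {ω | t ≤ |Q (1 - X ω)|} ⊆ {ω | X ω ≤ 1 - Φ t} ∪ {ω | 1 - Φ (-t) ≤ X ω} := by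
    intro ω (hω : t ≤ |Q (1 - X ω)|)
    rcases le_abs'.1 hω with hneg | hpos
    · have := monotone_cdf (gaussianReal 0 1) hneg
      exact Or.inr (show 1 - Φ (-t) ≤ X ω by linarith [hΦQ ω])
    · have := monotone_cdf (gaussianReal 0 1) hpos
      exact Or.inl (show X ω ≤ 1 - Φ t by linarith [hΦQ ω])
  calc μ {ω | t ≤ |Q (1 - X ω)|}
      ≤ μ {ω | X ω ≤ 1 - Φ t} + μ {ω | 1 - Φ (-t) ≤ X ω} :=
        (measure_mono hsub).trans (measure_union_le _ _)
    _ ≤ ENNReal.ofReal (1 - Φ t) + ENNReal.ofReal (Φ (-t)) := by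
        gcongr
        · exact measure_le_le_of_map_eq_uniform hX _
        · simpa using measure_ge_le_of_map_eq_uniform hX (1 - Φ (-t))
    _ ≤ ENNReal.ofReal (exp (-t ^ 2 / 2)) + ENNReal.ofReal (exp (-t ^ 2 / 2)) := by
        gcongr
        exacts [one_sub_cdf_gaussianReal_le ht, cdf_gaussianReal_neg_le ht]
    _ = ENNReal.ofReal (2 * exp (-t ^ 2 / 2)) := by
        rw [← ENNReal.ofReal_add (exp_pos _).le (exp_pos _).le, two_mul]

end Uniform

section BorelCantelli

variable {Ω : Type*} [MeasurableSpace Ω] {μ : Measure Ω}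

lemma ae_tendsto_zero_of_forall_ae_eventually_abs_lt {f : ℕ → Ω → ℝ}
    (h : ∀ ε > 0, ∀ᵐ ω ∂μ, ∀ᶠ n in atTop, |f n ω| < ε) :
    ∀ᵐ ω ∂μ, Tendsto (f · ω) atTop (𝓝 0) := by
  filter_upwards [ae_all_iff.2 fun k : ℕ => h (1 / (k + 1)) (by positivity)] with ω hω
  refine Metric.tendsto_nhds.2 fun ε hε => ?_
  obtain ⟨k, hk⟩ := exists_nat_one_div_lt hε
  filter_upwards [hω k] with n hn
  rw [Real.dist_eq, sub_zero]
  exact hn.trans hk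

lemma ae_tendsto_div_sqrt_zero_of_measure_le {X : ℕ → Ω → ℝ} {C : ℝ}
    (h : ∀ n t, 0 ≤ t → μ {ω | t ≤ |X n ω|} ≤ ENNReal.ofReal (C * exp (-t ^ 2 / 2))) :
    ∀ᵐ ω ∂μ, Tendsto (fun n => X n ω / √(n : ℝ)) atTop (𝓝 0) := by
  refine ae_tendsto_zero_of_forall_ae_eventually_abs_lt fun ε hε => ?_
  have hgeom : Summable fun n : ℕ => C * exp (-ε ^ 2 / 2) ^ n :=
    (summable_geometric_of_lt_one (exp_pos _).le (exp_lt_one_iff.2 (by nlinarith))).mul_left C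
  have hsum : ∑' n : ℕ, μ {ω | ε * √(n : ℝ) ≤ |X n ω|} ≠ ⊤ := by
    refine ne_top_of_le_ne_top hgeom.tsum_ofReal_ne_top (ENNReal.tsum_le_tsum fun n => ?_)
    refine (h n _ (by positivity)).trans_eq ?_
    rw [← exp_nat_mul, mul_pow, sq_sqrt (Nat.cast_nonneg n)]
    ring_nf
  filter_upwards [ae_eventually_notMem hsum] with ω hω
  filter_upwards [hω, eventually_gt_atTop 0] with n hn hn0
  rw [abs_div, abs_of_nonneg (sqrt_nonneg _), div_lt_iff₀ (by positivity)]
  simpa [mul_comm] using hn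

end BorelCantelli

lemma tendsto_neg_two_div_mul_of_tendsto_ratio {m : ℕ → ℕ} {L : ℕ → ℝ} {lam c : ℝ}
    (hlam : 0 < lam) (hm : Tendsto (fun n => (m n : ℝ) / n) atTop (𝓝 lam))
    (hL : Tendsto (fun n => -(2 / (m n : ℝ)) * L n) atTop (𝓝 c)) :
    Tendsto (fun n : ℕ => -(2 / (n : ℝ)) * L n) atTop (𝓝 (lam * c)) := by
  refine (hm.mul hL).congr' ?_
  filter_upwards [hm.eventually_const_lt hlam, eventually_gt_atTop 0] with n hmn hn
  have : (m n : ℝ) ≠ 0 := fun h => by simp [h] at hmn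
  field_simp

theorem stouffer_exact_slope_general
    {K : ℕ} (ℓ : ℕ) (hℓ : 1 ≤ ℓ) (hℓK : ℓ ≤ K)
    (lam c : Fin K → ℝ)
    (hlam : ∀ i, 0 < lam i)
    (hcpos : ∀ i : Fin K, (i : ℕ) < ℓ → 0 < c i)
    (hcnull : ∀ i : Fin K, ℓ ≤ (i : ℕ) → c i = 0)
    (nseq : Fin K → ℕ → ℕ)
    (hn : ∀ i, Tendsto (fun n : ℕ => (nseq i n : ℝ) / (n : ℝ)) atTop (nhds (lam i)))
    {Ω : Type*} [MeasurableSpace Ω] (μ : Measure Ω)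
    (p : ℕ → Fin K → Ω → ℝ)
    (hval : ∀ n i ω, p n i ω ∈ Ioo (0 : ℝ) 1)
    (hslope : ∀ i : Fin K, (i : ℕ) < ℓ →
      ∀ᵐ ω ∂μ, Tendsto (fun n : ℕ => -(2 / (nseq i n : ℝ)) * Real.log (p n i ω))
        atTop (nhds (c i)))
    (hnull : ∀ i : Fin K, ℓ ≤ (i : ℕ) →
      ∀ n, Measure.map (p n i) μ = volume.restrict (Ioo (0 : ℝ) 1))
    -- `Q` is an inverse of the standard Gaussian CDF on `(0,1)`
    (Q : ℝ → ℝ)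
    (hQ : ∀ u ∈ Ioo (0 : ℝ) 1, ((gaussianReal 0 1) (Iic (Q u))).toReal = u)
    -- the Stouffer statistic and its combined p-value
    (T : ℕ → Ω → ℝ)
    (hT : ∀ n ω, T n ω = ∑ i : Fin K, Q (1 - p n i ω))
    (r : ℕ → Ω → ℝ)
    (hr : ∀ n ω, r n ω =
      1 - ((gaussianReal 0 1) (Iic (T n ω / Real.sqrt (K : ℝ)))).toReal) :
    ∀ᵐ ω ∂μ, Tendsto (fun n : ℕ => -(2 / (n : ℝ)) * Real.log (r n ω))
      atTop
      (nhds ((1 / (K : ℝ)) * (∑ i : Fin K, Real.sqrt (lam i * c i)) ^ 2)) := by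
  have hΦQ : ∀ u ∈ Ioo (0 : ℝ) 1, Φ (Q u) = u := fun u hu => (cdf_eq_real _ _).trans (hQ u hu)
  have hcoord (i : Fin K) : ∀ᵐ ω ∂μ,
      Tendsto (fun n => Q (1 - p n i ω) / √(n : ℝ)) atTop (𝓝 √(lam i * c i)) := by
    rcases lt_or_ge (i : ℕ) ℓ with hi | hi
    · filter_upwards [hslope i hi] with ω hω
      refine tendsto_div_sqrt_of_tendsto_neg_two_div_mul_log (mul_pos (hlam i) (hcpos i hi)) ?_
      refine (tendsto_neg_two_div_mul_of_tendsto_ratio (hlam i) (hn i) hω).congr fun n => ?_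
      have h1p : 1 - p n i ω ∈ Ioo (0 : ℝ) 1 :=
        ⟨by linarith [(hval n i ω).2], by linarith [(hval n i ω).1]⟩
      rw [hΦQ _ h1p, sub_sub_cancel]
    · rw [hcnull i hi, mul_zero, sqrt_zero]
      exact ae_tendsto_div_sqrt_zero_of_measure_le fun n t ht =>
        measure_le_abs_quantile_le (hnull i hi n) (hval n i) hΦQ ht
  filter_upwards [ae_all_iff.2 hcoord] with ω hω
  have hK : (0 : ℝ) < K := by exact_mod_cast hℓ.trans hℓK
  have hS : 0 < ∑ i : Fin K, √(lam i * c i) :=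
    Finset.sum_pos' (fun i _ => sqrt_nonneg _) ⟨⟨0, by omega⟩, Finset.mem_univ _,
      sqrt_pos.2 (mul_pos (hlam _) (hcpos _ hℓ))⟩
  have hTlim : Tendsto (fun n => T n ω / √(K : ℝ) / √(n : ℝ)) atTop
      (𝓝 ((∑ i : Fin K, √(lam i * c i)) / √(K : ℝ))) :=
    ((tendsto_finsetSum _ fun i _ => hω i).div_const _).congr fun n => by
      rw [hT, ← Finset.sum_div, div_right_comm]
  have hlim := tendsto_neg_two_div_mul_log_one_sub_cdf (div_pos hS (sqrt_pos.2 hK)) hTlim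
  rw [div_pow, sq_sqrt hK.le, div_eq_inv_mul, ← one_div] at hlim
  refine hlim.congr fun n => ?_
  rw [hr, cdf_eq_real, measureReal_def]

/-- Stouffer's method has exact slope `(1/K) * (∑ i ≤ ℓ, √(λ i * c i))²`, which for
`ℓ ≥ 2` is in general strictly smaller than the maximum attainable slope
`∑ λ i * c i`: Stouffer's method is not asymptotically Bahadur optimal. -/
theorem stouffer_exact_slope
    {K : ℕ} (hK : 1 ≤ K) (ℓ : ℕ) (hℓ : 1 ≤ ℓ) (hℓK : ℓ ≤ K)
    (lam c : Fin K → ℝ)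
    (hlam : ∀ i, 0 < lam i)
    (hcpos : ∀ i : Fin K, (i : ℕ) < ℓ → 0 < c i)
    (hcnull : ∀ i : Fin K, ℓ ≤ (i : ℕ) → c i = 0)
    (nseq : Fin K → ℕ → ℕ)
    (hn : ∀ i, Tendsto (fun n : ℕ => (nseq i n : ℝ) / (n : ℝ)) atTop (nhds (lam i)))
    {Ω : Type*} [MeasurableSpace Ω] (μ : Measure Ω) [IsProbabilityMeasure μ]
    (p : ℕ → Fin K → Ω → ℝ)
    (hmeas : ∀ n i, Measurable (p n i))
    (hval : ∀ n i ω, p n i ω ∈ Ioo (0 : ℝ) 1)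
    (hslope : ∀ i : Fin K, (i : ℕ) < ℓ →
      ∀ᵐ ω ∂μ, Tendsto (fun n : ℕ => -(2 / (nseq i n : ℝ)) * Real.log (p n i ω))
        atTop (nhds (c i)))
    (hnull : ∀ i : Fin K, ℓ ≤ (i : ℕ) →
      ∀ n, Measure.map (p n i) μ = volume.restrict (Ioo (0 : ℝ) 1))
    -- `Q` is an inverse of the standard Gaussian CDF on `(0,1)`
    (Q : ℝ → ℝ)
    (hQ : ∀ u ∈ Ioo (0 : ℝ) 1, ((gaussianReal 0 1) (Iic (Q u))).toReal = u)
    -- the Stouffer statistic and its combined p-value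
    (T : ℕ → Ω → ℝ)
    (hT : ∀ n ω, T n ω = ∑ i : Fin K, Q (1 - p n i ω))
    (r : ℕ → Ω → ℝ)
    (hr : ∀ n ω, r n ω =
      1 - ((gaussianReal 0 1) (Iic (T n ω / Real.sqrt (K : ℝ)))).toReal) :
    ∀ᵐ ω ∂μ, Tendsto (fun n : ℕ => -(2 / (n : ℝ)) * Real.log (r n ω))
      atTop
      (nhds ((1 / (K : ℝ)) * (∑ i : Fin K, Real.sqrt (lam i * c i)) ^ 2)) :=
  stouffer_exact_slope_general ℓ hℓ hℓK lam c hlam hcpos hcnull nseq hn μ p hval hslope hnull Q hQ T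
    hT r hr
end

section
/- Fix an integer K ≥ 1 and an integer ℓ with 1 ≤ ℓ ≤ K. Fix reals λ_1,…,λ_K > 0 and c_1,…,c_ℓ > 0, and set c_i = 0 for ℓ < i ≤ K. Fix sequences n_1,…,n_K : ℕ → ℕ with n_i(n)/n → λ_i as n → ∞. On a probability space, for each n let p_1^{(n)},…,p_K^{(n)} be random variables with values in (0,1) such that: (i) for each 1 ≤ i ≤ ℓ, −(2/n_i(n))·log p_i^{(n)} → c_i almost surely as n → ∞; (ii) for each ℓ < i ≤ K and every n, p_i^{(n)} is uniformly distributed on (0,1). Fix τ ∈ (0,1]. Define the hard-thresholded truncated Fisher statistic T(u) = ∑_{i=1}^K (−2·log u_i)·1{u_i ≤ τ} for u ∈ (0,1)^K, its null survival function G(t) = μ_K{u : T(u) ≥ t}, and q_n = G(T(p_1^{(n)},…,p_K^{(n)})). Then −(2/n)·log q_n → ∑_{i=1}^ℓ λ_i·c_i almost surely as n → ∞; i.e., TFhard is asymptotically Bahadur optimal for every τ ∈ (0,1]. -/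
/-!
Write `F(u) = ∑ -2 log uᵢ` for Fisher's statistic. Coordinatewise, `F(p⁽ⁿ⁾)/n → ∑ λᵢ cᵢ`
almost surely: for the alternatives by rescaling `nᵢ(n)/n → λᵢ`, for the null coordinates by
Borel–Cantelli. Since `F + 2K log τ ≤ T ≤ F` on the unit cube, `T(p⁽ⁿ⁾)/n` has the same limit.
It then suffices that the null tail of `T` decays like `e^{-t/2}` up to subexponential
factors: the box with one coordinate in `(0, τe^{-t/2}]` and all others in `(0, τ]` gives
`G(t) ≥ τ^K e^{-t/2}`, and the Chernoff bound for `F` gives `G(t) ≤ (1-2s)^{-K} e^{-st}` for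
every `s < 1/2`.
-/

open MeasureTheory Filter Set ProbabilityTheory

open scoped ENNReal Topology

lemma neg_two_div_mul_log_le_of_le (n : ℕ) {x y : ℝ} (hx : 0 < x) (hxy : x ≤ y) :
    -(2 / (n : ℝ)) * Real.log y ≤ -(2 / (n : ℝ)) * Real.log x :=
  mul_le_mul_of_nonpos_left (Real.log_le_log hx hxy) (neg_nonpos.2 (by positivity))

lemma neg_two_div_mul_log_mul_exp (n : ℕ) {D : ℝ} (hD : 0 < D) (a : ℝ) :
    -(2 / (n : ℝ)) * Real.log (D * Real.exp (-a)) = 2 * a / n - 2 * Real.log D / n := by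
  rw [Real.log_mul hD.ne' (Real.exp_pos _).ne', Real.log_exp]
  ring

lemma Filter.Tendsto.neg_two_div_mul_log_of_div_natCast {m : ℕ → ℕ} {x : ℕ → ℝ} {a c : ℝ}
    (hx : Tendsto (fun n => -(2 / (m n : ℝ)) * Real.log (x n)) atTop (𝓝 c))
    (hm : Tendsto (fun n => (m n : ℝ) / n) atTop (𝓝 a)) (ha : a ≠ 0) :
    Tendsto (fun n : ℕ => -(2 / (n : ℝ)) * Real.log (x n)) atTop (𝓝 (a * c)) := by
  refine (hm.mul hx).congr' ?_
  filter_upwards [hm.eventually_ne ha] with n hn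
  have hmn : (m n : ℝ) ≠ 0 := fun h => hn (by rw [h, zero_div])
  field_simp

lemma tendsto_neg_two_div_mul_log_of_tail_bounds {S q : ℕ → ℝ} {L C : ℝ}
    (hS : Tendsto (fun n => S n / n) atTop (𝓝 L)) (hC : 0 < C)
    (hlower : ∀ n, C * Real.exp (-(S n / 2)) ≤ q n)
    (hupper : ∀ s ∈ Ioo (0 : ℝ) (1 / 2), ∃ D, ∀ n, q n ≤ D * Real.exp (-(s * S n))) :
    Tendsto (fun n : ℕ => -(2 / (n : ℝ)) * Real.log (q n)) atTop (𝓝 L) := by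
  have hq : ∀ n, 0 < q n := fun n => (by positivity : 0 < C * Real.exp _).trans_le (hlower n)
  refine tendsto_order.2 ⟨fun b hb => ?_, fun b hb => ?_⟩
  · have hcont : Tendsto (fun s : ℝ => 2 * s * L) (𝓝[<] (1 / 2)) (𝓝 L) := by
      have : Tendsto (fun s : ℝ => 2 * s * L) (𝓝 (1 / 2)) (𝓝 (2 * (1 / 2) * L)) :=
        ((continuous_const.mul continuous_id).mul continuous_const).tendsto _
      simpa using this.mono_left nhdsWithin_le_nhds
    obtain ⟨s, hsb, hs⟩ := ((hcont.eventually (eventually_gt_nhds hb)).and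
      (Ioo_mem_nhdsLT (by norm_num : (0 : ℝ) < 1 / 2))).exists
    obtain ⟨D, hD⟩ := hupper s hs
    have hDpos : 0 < D := pos_of_mul_pos_left ((hq 0).trans_le (hD 0)) (Real.exp_pos _).le
    have hlim : Tendsto (fun n : ℕ => 2 * (s * S n) / n - 2 * Real.log D / n) atTop
        (𝓝 (2 * s * L - 0)) := by
      refine Tendsto.sub ?_ (tendsto_const_div_atTop_nhds_zero_nat _)
      simpa [mul_div_assoc, mul_assoc] using hS.const_mul (2 * s)
    filter_upwards [hlim.eventually (eventually_gt_nhds (by simpa using hsb))] with n hn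
    rw [← neg_two_div_mul_log_mul_exp n hDpos] at hn
    exact hn.trans_le (neg_two_div_mul_log_le_of_le n (hq n) (hD n))
  · have hlim : Tendsto (fun n : ℕ => 2 * (S n / 2) / n - 2 * Real.log C / n) atTop
        (𝓝 (L - 0)) := by
      refine Tendsto.sub ?_ (tendsto_const_div_atTop_nhds_zero_nat _)
      simpa [mul_div_assoc', mul_div_cancel_left₀] using hS
    filter_upwards [hlim.eventually (eventually_lt_nhds (by simpa using hb))] with n hn
    rw [← neg_two_div_mul_log_mul_exp n hC] at hn
    exact (neg_two_div_mul_log_le_of_le n (by positivity) (hlower n)).trans_lt hn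

section NullSlope

variable {Ω : Type*} [MeasurableSpace Ω] {μ : Measure Ω}

lemma measure_lt_le_ofReal_of_map_eq_uniform {X : Ω → ℝ} (hX : Measurable X)
    (hd : Measure.map X μ = volume.restrict (Ioo (0 : ℝ) 1)) (x : ℝ) :
    μ {ω | X ω < x} ≤ ENNReal.ofReal x :=
  calc μ {ω | X ω < x} = volume (Iio x ∩ Ioo 0 1) := by
        rw [← Measure.restrict_apply measurableSet_Iio, ← hd,
          Measure.map_apply hX measurableSet_Iio]
        rfl
    _ ≤ volume (Ioo 0 x) := measure_mono fun y hy => ⟨hy.2.1, hy.1⟩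
    _ = ENNReal.ofReal x := by rw [Real.volume_Ioo, sub_zero]

lemma ae_eventually_exp_neg_mul_le {X : ℕ → Ω → ℝ}
    (hX : ∀ n x, μ {ω | X n ω < x} ≤ ENNReal.ofReal x) {ε : ℝ} (hε : 0 < ε) :
    ∀ᵐ ω ∂μ, ∀ᶠ n : ℕ in atTop, Real.exp (-(ε * n)) ≤ X n ω := by
  have hgeom : ∀ n : ℕ, Real.exp (-(ε * n)) = Real.exp (-ε) ^ n := fun n => by
    rw [← Real.exp_nat_mul]; ring_nf
  have hsum : ∑' n : ℕ, μ {ω | X n ω < Real.exp (-(ε * n))} ≠ ∞ := by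
    refine ne_top_of_le_ne_top ?_ (ENNReal.tsum_le_tsum fun n => hX n _)
    simp_rw [hgeom]
    rw [← ENNReal.ofReal_tsum_of_nonneg (fun n => by positivity)
      (summable_geometric_of_lt_one (Real.exp_pos _).le (Real.exp_lt_one_iff.2 (neg_lt_zero.2 hε)))]
    exact ENNReal.ofReal_ne_top
  filter_upwards [ae_eventually_notMem hsum] with ω hω
  filter_upwards [hω] with n hn using not_lt.1 hn

lemma ae_tendsto_neg_two_div_mul_log_of_superuniform {X : ℕ → Ω → ℝ}
    (hv : ∀ n ω, X n ω ∈ Icc (0 : ℝ) 1) (hX : ∀ n x, μ {ω | X n ω < x} ≤ ENNReal.ofReal x) :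
    ∀ᵐ ω ∂μ, Tendsto (fun n : ℕ => -(2 / (n : ℝ)) * Real.log (X n ω)) atTop (𝓝 0) := by
  have hall : ∀ᵐ ω ∂μ, ∀ m : ℕ, ∀ᶠ n : ℕ in atTop,
      Real.exp (-(1 / (m + 1) * n)) ≤ X n ω :=
    ae_all_iff.2 fun m => ae_eventually_exp_neg_mul_le hX (by positivity)
  filter_upwards [hall] with ω hω
  refine tendsto_order.2 ⟨fun b hb => Eventually.of_forall fun n => hb.trans_le ?_, fun b hb => ?_⟩
  · exact mul_nonneg_of_nonpos_of_nonpos (neg_nonpos.2 (by positivity))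
      (Real.log_nonpos (hv n ω).1 (hv n ω).2)
  · obtain ⟨m, hm⟩ := exists_nat_gt (2 / b)
    have hmb : 2 / ((m : ℝ) + 1) < b := by
      rw [div_lt_iff₀ hb] at hm
      rw [div_lt_iff₀ (by positivity)]
      nlinarith
    filter_upwards [hω m, eventually_gt_atTop 0] with n hn hn0
    calc -(2 / (n : ℝ)) * Real.log (X n ω)
        ≤ -(2 / (n : ℝ)) * Real.log (Real.exp (-(1 / (m + 1) * n))) :=
          neg_two_div_mul_log_le_of_le n (Real.exp_pos _) hn
      _ = 2 / (m + 1) := by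
          rw [Real.log_exp]
          field_simp
      _ < b := hmb

end NullSlope

section UnitInterval

instance : IsProbabilityMeasure (volume.restrict (Icc (0 : ℝ) 1)) :=
  ⟨by simp [Real.volume_Icc]⟩

lemma neg_two_mul_log_nonneg {x : ℝ} (hx : x ∈ Icc (0 : ℝ) 1) : 0 ≤ -2 * Real.log x := by
  nlinarith [Real.log_nonpos hx.1 hx.2]

lemma volume_restrict_Icc_Ioc_zero {a : ℝ} (ha : a ≤ 1) :
    volume.restrict (Icc (0 : ℝ) 1) (Ioc 0 a) = ENNReal.ofReal a := by
  rw [Measure.restrict_apply measurableSet_Ioc,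
    inter_eq_left.2 (Ioc_subset_Icc_self.trans (Icc_subset_Icc_right ha)), Real.volume_Ioc,
    sub_zero]

lemma integrableOn_exp_mul_log_Icc {r : ℝ} (hr : -1 < r) :
    IntegrableOn (fun x => Real.exp (r * Real.log x)) (Icc 0 1) := by
  rw [integrableOn_Icc_iff_integrableOn_Ioc]
  refine (intervalIntegral.intervalIntegrable_rpow' hr).1.congr_fun (fun x hx => ?_)
    measurableSet_Ioc
  simp only [Real.rpow_def_of_pos hx.1, mul_comm]

lemma integral_exp_mul_log_Icc {r : ℝ} (hr : -1 < r) :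
    ∫ x in Icc (0 : ℝ) 1, Real.exp (r * Real.log x) = 1 / (r + 1) := by
  rw [integral_Icc_eq_integral_Ioc, ← intervalIntegral.integral_of_le zero_le_one]
  rw [intervalIntegral.integral_congr_ae (g := fun x => x ^ r) ?_, integral_rpow (Or.inl hr)]
  · simp [Real.zero_rpow (by linarith : r + 1 ≠ 0)]
  · filter_upwards with x hx
    rw [uIoc_of_le zero_le_one] at hx
    rw [Real.rpow_def_of_pos hx.1, mul_comm]

end UnitInterval

section Statistics

variable {ι : Type*} [Fintype ι]

noncomputable def fisherStat (u : ι → ℝ) : ℝ := ∑ i, -2 * Real.log (u i)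

noncomputable def tfHardStat (τ : ℝ) (u : ι → ℝ) : ℝ :=
  ∑ i, if u i ≤ τ then -2 * Real.log (u i) else 0

lemma tfHardStat_nonneg (τ : ℝ) {u : ι → ℝ} (hu : ∀ i, u i ∈ Icc (0 : ℝ) 1) :
    0 ≤ tfHardStat τ u :=
  Finset.sum_nonneg fun i _ => by
    split_ifs
    exacts [neg_two_mul_log_nonneg (hu i), le_rfl]

lemma tfHardStat_le_fisherStat (τ : ℝ) {u : ι → ℝ} (hu : ∀ i, u i ∈ Icc (0 : ℝ) 1) :
    tfHardStat τ u ≤ fisherStat u :=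
  Finset.sum_le_sum fun i _ => by
    split_ifs
    exacts [le_rfl, neg_two_mul_log_nonneg (hu i)]

lemma fisherStat_add_le_tfHardStat {τ : ℝ} (hτ : τ ∈ Ioc (0 : ℝ) 1) (u : ι → ℝ) :
    fisherStat u + 2 * Fintype.card ι * Real.log τ ≤ tfHardStat τ u := by
  have hterm : ∀ i, -2 * Real.log (u i) + 2 * Real.log τ
      ≤ if u i ≤ τ then -2 * Real.log (u i) else 0 := fun i => by
    split_ifs with h
    · linarith [Real.log_nonpos hτ.1.le hτ.2]
    · linarith [Real.log_le_log hτ.1 (not_le.1 h).le]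
  calc fisherStat u + 2 * Fintype.card ι * Real.log τ
      = ∑ i, (-2 * Real.log (u i) + 2 * Real.log τ) := by
        rw [fisherStat, Finset.sum_add_distrib, Finset.sum_const, Finset.card_univ, nsmul_eq_mul]
        ring
    _ ≤ tfHardStat τ u := Finset.sum_le_sum fun i _ => hterm i

lemma fisherStat_div (u : ι → ℝ) (n : ℕ) :
    fisherStat u / n = ∑ i, -(2 / (n : ℝ)) * Real.log (u i) := by
  rw [fisherStat, Finset.sum_div]
  congr! 1 with i
  ring

lemma tendsto_tfHardStat_div_of_fisherStat {τ : ℝ} (hτ : τ ∈ Ioc (0 : ℝ) 1) {u : ℕ → ι → ℝ}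
    (hu : ∀ n i, u n i ∈ Icc (0 : ℝ) 1) {L : ℝ}
    (h : Tendsto (fun n : ℕ => fisherStat (u n) / n) atTop (𝓝 L)) :
    Tendsto (fun n : ℕ => tfHardStat τ (u n) / n) atTop (𝓝 L) := by
  have hlow : Tendsto (fun n : ℕ => fisherStat (u n) / n + 2 * Fintype.card ι * Real.log τ / n)
      atTop (𝓝 (L + 0)) := h.add (tendsto_const_div_atTop_nhds_zero_nat _)
  rw [add_zero] at hlow
  refine tendsto_of_tendsto_of_tendsto_of_le_of_le hlow h (fun n => ?_) fun n => ?_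
  · rw [← add_div]
    exact div_le_div_of_nonneg_right (fisherStat_add_le_tfHardStat hτ _) n.cast_nonneg
  · exact div_le_div_of_nonneg_right (tfHardStat_le_fisherStat τ (hu n)) n.cast_nonneg

lemma exp_mul_fisherStat (s : ℝ) (u : ι → ℝ) :
    Real.exp (s * fisherStat u) = ∏ i, Real.exp (-2 * s * Real.log (u i)) := by
  rw [fisherStat, Finset.mul_sum, Real.exp_sum]
  congr! 2
  ring

lemma integrable_exp_mul_fisherStat {s : ℝ} (hs : s < 1 / 2) :
    Integrable (fun u => Real.exp (s * fisherStat u))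
      (Measure.pi fun _ : ι => volume.restrict (Icc (0 : ℝ) 1)) := by
  simp_rw [exp_mul_fisherStat]
  exact Integrable.fintype_prod fun _ => integrableOn_exp_mul_log_Icc (by linarith)

lemma mgf_fisherStat {s : ℝ} (hs : s < 1 / 2) :
    mgf fisherStat (Measure.pi fun _ : ι => volume.restrict (Icc (0 : ℝ) 1)) s
      = (1 / (1 - 2 * s)) ^ Fintype.card ι := by
  rw [mgf]
  simp_rw [exp_mul_fisherStat]
  rw [integral_fintype_prod_eq_pow (fun x => Real.exp (-2 * s * Real.log x)),
    integral_exp_mul_log_Icc (by linarith)]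
  ring_nf

lemma measureReal_le_fisherStat_le {s : ℝ} (hs : s ∈ Ioo (0 : ℝ) (1 / 2)) (t : ℝ) :
    (Measure.pi fun _ : ι => volume.restrict (Icc (0 : ℝ) 1)).real {u | t ≤ fisherStat u}
      ≤ (1 / (1 - 2 * s)) ^ Fintype.card ι * Real.exp (-(s * t)) := by
  have := measure_ge_le_exp_mul_mgf (X := fisherStat (ι := ι)) t hs.1.le
    (integrable_exp_mul_fisherStat hs.2)
  rw [mgf_fisherStat hs.2] at this
  simpa [mul_comm] using this

lemma ae_mem_Icc_pi :
    ∀ᵐ u ∂(Measure.pi fun _ : ι => volume.restrict (Icc (0 : ℝ) 1)), ∀ i, u i ∈ Icc (0 : ℝ) 1 :=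
  ae_all_iff.2 fun i =>
    (measurePreserving_eval _ i).quasiMeasurePreserving.ae (ae_restrict_mem measurableSet_Icc)

lemma measureReal_le_tfHardStat_le (τ : ℝ) {s : ℝ} (hs : s ∈ Ioo (0 : ℝ) (1 / 2)) (t : ℝ) :
    (Measure.pi fun _ : ι => volume.restrict (Icc (0 : ℝ) 1)).real {u | t ≤ tfHardStat τ u}
      ≤ (1 / (1 - 2 * s)) ^ Fintype.card ι * Real.exp (-(s * t)) := by
  refine le_trans (ENNReal.toReal_mono (measure_ne_top _ _) (measure_mono_ae ?_))
    (measureReal_le_fisherStat_le hs t)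
  filter_upwards [ae_mem_Icc_pi] with u hu htu
  exact le_trans htu (tfHardStat_le_fisherStat τ hu)

lemma univ_pi_update_Ioc_subset_le_tfHardStat [DecidableEq ι] {τ : ℝ} (hτ : τ ∈ Ioc (0 : ℝ) 1)
    {t : ℝ} (ht : 0 ≤ t) (i₀ : ι) :
    univ.pi (Function.update (fun _ => Ioc 0 τ) i₀ (Ioc 0 (τ * Real.exp (-(t / 2)))))
      ⊆ {u | t ≤ tfHardStat τ u} := by
  intro u hu
  have hu₀ : u i₀ ∈ Ioc 0 (τ * Real.exp (-(t / 2))) := by simpa using hu i₀ (mem_univ i₀)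
  have hu₀τ : u i₀ ≤ τ :=
    hu₀.2.trans (mul_le_of_le_one_right hτ.1.le (Real.exp_le_one_iff.2 (by linarith)))
  have hcube : ∀ i, u i ∈ Icc (0 : ℝ) 1 := fun i => by
    rcases eq_or_ne i i₀ with rfl | h
    · exact ⟨hu₀.1.le, hu₀τ.trans hτ.2⟩
    · have : u i ∈ Ioc 0 τ := by simpa [h] using hu i (mem_univ i)
      exact ⟨this.1.le, this.2.trans hτ.2⟩
  have hlog : t ≤ -2 * Real.log (u i₀) := by
    have := Real.log_le_log hu₀.1 hu₀.2
    rw [Real.log_mul hτ.1.ne' (Real.exp_pos _).ne', Real.log_exp] at this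
    linarith [Real.log_nonpos hτ.1.le hτ.2]
  calc t ≤ if u i₀ ≤ τ then -2 * Real.log (u i₀) else 0 := by rwa [if_pos hu₀τ]
    _ ≤ tfHardStat τ u := Finset.single_le_sum (f := fun i => if u i ≤ τ then _ else _)
          (fun i _ => by split_ifs; exacts [neg_two_mul_log_nonneg (hcube i), le_rfl])
          (Finset.mem_univ i₀)

lemma pi_univ_pi_update_Ioc [DecidableEq ι] {a b : ℝ} (ha : a ≤ 1) (hb : b ≤ 1) (i₀ : ι) :
    (Measure.pi fun _ : ι => volume.restrict (Icc (0 : ℝ) 1))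
        (univ.pi (Function.update (fun _ => Ioc 0 b) i₀ (Ioc 0 a)))
      = ENNReal.ofReal a * ENNReal.ofReal b ^ (Fintype.card ι - 1) := by
  have hfactor : ∀ i, volume.restrict (Icc (0 : ℝ) 1)
      (Function.update (fun _ : ι => Ioc 0 b) i₀ (Ioc 0 a) i)
      = Function.update (fun _ : ι => ENNReal.ofReal b) i₀ (ENNReal.ofReal a) i := fun i => by
    rcases eq_or_ne i i₀ with rfl | h
    · simp [volume_restrict_Icc_Ioc_zero ha]
    · simp [h, volume_restrict_Icc_Ioc_zero hb]
  rw [Measure.pi_pi, Finset.prod_congr rfl fun i _ => hfactor i,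
    Finset.prod_update_of_mem (Finset.mem_univ _), Finset.prod_const,
    Finset.card_sdiff_of_subset (by simp), Finset.card_univ, Finset.card_singleton]

lemma pow_card_mul_exp_le_measureReal_le_tfHardStat [Nonempty ι] {τ : ℝ}
    (hτ : τ ∈ Ioc (0 : ℝ) 1) {t : ℝ} (ht : 0 ≤ t) :
    τ ^ Fintype.card ι * Real.exp (-(t / 2))
      ≤ (Measure.pi fun _ : ι => volume.restrict (Icc (0 : ℝ) 1)).real
          {u | t ≤ tfHardStat τ u} := by
  classical
  obtain ⟨i₀⟩ := ‹Nonempty ι›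
  have ha : τ * Real.exp (-(t / 2)) ≤ 1 :=
    mul_le_one₀ hτ.2 (Real.exp_pos _).le (Real.exp_le_one_iff.2 (by linarith))
  refine (le_of_eq ?_).trans
    (measureReal_mono (univ_pi_update_Ioc_subset_le_tfHardStat hτ ht i₀))
  rw [measureReal_def, pi_univ_pi_update_Ioc ha hτ.2, ← ENNReal.ofReal_pow hτ.1.le,
    ← ENNReal.ofReal_mul (mul_pos hτ.1 (Real.exp_pos _)).le,
    ENNReal.toReal_ofReal (mul_nonneg (mul_pos hτ.1 (Real.exp_pos _)).le (pow_nonneg hτ.1.le _)),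
    mul_comm τ, mul_assoc, ← pow_succ',
    Nat.sub_add_cancel Fintype.card_pos, mul_comm]

end Statistics

theorem TFhard_is_ABO_general
    {K : ℕ} (hK : 1 ≤ K) (ℓ : ℕ)
    (lam c : Fin K → ℝ)
    (hlam : ∀ i, 0 < lam i)
    (hcnull : ∀ i : Fin K, ℓ ≤ (i : ℕ) → c i = 0)
    (nseq : Fin K → ℕ → ℕ)
    (hn : ∀ i, Tendsto (fun n : ℕ => (nseq i n : ℝ) / (n : ℝ)) atTop (nhds (lam i)))
    {Ω : Type*} [MeasurableSpace Ω] (μ : Measure Ω)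
    (p : ℕ → Fin K → Ω → ℝ)
    (hmeas : ∀ n i, Measurable (p n i))
    (hval : ∀ n i ω, p n i ω ∈ Ioo (0 : ℝ) 1)
    (hslope : ∀ i : Fin K, (i : ℕ) < ℓ →
      ∀ᵐ ω ∂μ, Tendsto (fun n : ℕ => -(2 / (nseq i n : ℝ)) * Real.log (p n i ω))
        atTop (nhds (c i)))
    (hnull : ∀ i : Fin K, ℓ ≤ (i : ℕ) →
      ∀ n, Measure.map (p n i) μ = volume.restrict (Ioo (0 : ℝ) 1))
    (τ : ℝ) (hτ : τ ∈ Ioc (0 : ℝ) 1)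
    -- the TFhard statistic
    (T : (Fin K → ℝ) → ℝ)
    (hT : ∀ u : Fin K → ℝ, T u =
      ∑ i : Fin K, if u i ≤ τ then -2 * Real.log (u i) else 0)
    -- the null survival function of `T` under the uniform measure on [0,1]^K
    (G : ℝ → ℝ)
    (hG : ∀ t, G t =
      ((Measure.pi fun _ : Fin K => volume.restrict (Icc (0 : ℝ) 1))
        {u | t ≤ T u}).toReal)
    -- the TFhard combined p-value
    (q : ℕ → Ω → ℝ)
    (hq : ∀ n ω, q n ω = G (T (fun i => p n i ω))) :
    ∀ᵐ ω ∂μ, Tendsto (fun n : ℕ => -(2 / (n : ℝ)) * Real.log (q n ω))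
      atTop (nhds (∑ i : Fin K, lam i * c i)) := by
  obtain rfl : T = tfHardStat τ := funext hT
  have : Nonempty (Fin K) := ⟨⟨0, hK⟩⟩
  have hcube : ∀ n ω i, p n i ω ∈ Icc (0 : ℝ) 1 := fun n ω i => Ioo_subset_Icc_self (hval n i ω)
  have hslopes : ∀ᵐ ω ∂μ, ∀ i, Tendsto (fun n : ℕ => -(2 / (n : ℝ)) * Real.log (p n i ω))
      atTop (𝓝 (lam i * c i)) := by
    refine ae_all_iff.2 fun i => ?_
    rcases lt_or_ge (i : ℕ) ℓ with hi | hi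
    · filter_upwards [hslope i hi] with ω hω
      exact hω.neg_two_div_mul_log_of_div_natCast (hn i) (hlam i).ne'
    · rw [hcnull i hi, mul_zero]
      exact ae_tendsto_neg_two_div_mul_log_of_superuniform (fun n ω => hcube n ω i)
        fun n => measure_lt_le_ofReal_of_map_eq_uniform (hmeas n i) (hnull i hi n)
  filter_upwards [hslopes] with ω hω
  have hF : Tendsto (fun n : ℕ => fisherStat (fun i => p n i ω) / n) atTop
      (𝓝 (∑ i, lam i * c i)) := by
    simpa only [fisherStat_div] using tendsto_finsetSum _ fun i _ => hω i
  refine tendsto_neg_two_div_mul_log_of_tail_bounds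
    (tendsto_tfHardStat_div_of_fisherStat hτ (fun n => hcube n ω) hF) (pow_pos hτ.1 K)
    (fun n => ?_) fun s hs => ⟨(1 / (1 - 2 * s)) ^ Fintype.card (Fin K), fun n => ?_⟩
  · rw [hq, hG, ← measureReal_def]
    simpa only [Fintype.card_fin] using pow_card_mul_exp_le_measureReal_le_tfHardStat (ι := Fin K)
      hτ (tfHardStat_nonneg τ (hcube n ω))
  · rw [hq, hG, ← measureReal_def]
    exact measureReal_le_tfHardStat_le τ hs _

/-- The hard-thresholded truncated Fisher method (TFhard) is asymptotically Bahadur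
optimal for every threshold `τ ∈ (0,1]`: its combined p-value has exact slope
`∑ i, λ i * c i`, the maximum attainable exact slope. -/
theorem TFhard_is_ABO
    {K : ℕ} (hK : 1 ≤ K) (ℓ : ℕ) (hℓ : 1 ≤ ℓ) (hℓK : ℓ ≤ K)
    (lam c : Fin K → ℝ)
    (hlam : ∀ i, 0 < lam i)
    (hcpos : ∀ i : Fin K, (i : ℕ) < ℓ → 0 < c i)
    (hcnull : ∀ i : Fin K, ℓ ≤ (i : ℕ) → c i = 0)
    (nseq : Fin K → ℕ → ℕ)
    (hn : ∀ i, Tendsto (fun n : ℕ => (nseq i n : ℝ) / (n : ℝ)) atTop (nhds (lam i)))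
    {Ω : Type*} [MeasurableSpace Ω] (μ : Measure Ω) [IsProbabilityMeasure μ]
    (p : ℕ → Fin K → Ω → ℝ)
    (hmeas : ∀ n i, Measurable (p n i))
    (hval : ∀ n i ω, p n i ω ∈ Ioo (0 : ℝ) 1)
    (hslope : ∀ i : Fin K, (i : ℕ) < ℓ →
      ∀ᵐ ω ∂μ, Tendsto (fun n : ℕ => -(2 / (nseq i n : ℝ)) * Real.log (p n i ω))
        atTop (nhds (c i)))
    (hnull : ∀ i : Fin K, ℓ ≤ (i : ℕ) →
      ∀ n, Measure.map (p n i) μ = volume.restrict (Ioo (0 : ℝ) 1))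
    (τ : ℝ) (hτ : τ ∈ Ioc (0 : ℝ) 1)
    -- the TFhard statistic
    (T : (Fin K → ℝ) → ℝ)
    (hT : ∀ u : Fin K → ℝ, T u =
      ∑ i : Fin K, if u i ≤ τ then -2 * Real.log (u i) else 0)
    -- the null survival function of `T` under the uniform measure on [0,1]^K
    (G : ℝ → ℝ)
    (hG : ∀ t, G t =
      ((Measure.pi fun _ : Fin K => volume.restrict (Icc (0 : ℝ) 1))
        {u | t ≤ T u}).toReal)
    -- the TFhard combined p-value
    (q : ℕ → Ω → ℝ)
    (hq : ∀ n ω, q n ω = G (T (fun i => p n i ω))) :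
    ∀ᵐ ω ∂μ, Tendsto (fun n : ℕ => -(2 / (n : ℝ)) * Real.log (q n ω))
      atTop (nhds (∑ i : Fin K, lam i * c i)) :=
  TFhard_is_ABO_general hK ℓ lam c hlam hcnull nseq hn μ p hmeas hval hslope hnull τ hτ T hT G hG q
    hq
end

section
/- Fix an integer K ≥ 1 and an integer ℓ with 1 ≤ ℓ ≤ K. Fix reals λ_1,…,λ_K > 0 and c_1,…,c_ℓ > 0, and set c_i = 0 for ℓ < i ≤ K. Fix sequences n_1,…,n_K : ℕ → ℕ with n_i(n)/n → λ_i as n → ∞. On a probability space, for each n let p_1^{(n)},…,p_K^{(n)} be random variables with values in (0,1) such that: (i) for each 1 ≤ i ≤ ℓ, −(2/n_i(n))·log p_i^{(n)} → c_i almost surely as n → ∞; (ii) for each ℓ < i ≤ K and every n, p_i^{(n)} is uniformly distributed on (0,1). Fix τ ∈ (0,1]. Define the soft-thresholded truncated Fisher statistic T(u) = ∑_{i=1}^K max(−2·log u_i + 2·log τ, 0) for u ∈ (0,1)^K, its null survival function G(t) = μ_K{u : T(u) ≥ t}, and q_n = G(T(p_1^{(n)},…,p_K^{(n)})). Then −(2/n)·log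 q_n → ∑_{i=1}^ℓ λ_i·c_i almost surely as n → ∞; i.e., TFsoft is asymptotically Bahadur optimal for every τ ∈ (0,1]. -/
open MeasureTheory Filter Set ProbabilityTheory

/-!
Under the null, the survival function `G` of the soft-thresholded statistic satisfies
`τ e^{-t/2} ≤ G t ≤ e^{(1-t)/2} t^K`: the lower bound comes from the box on which one coordinate
is below `τ e^{-t/2}`, the upper bound from a Chernoff bound, the statistic being dominated by
Fisher's `∑ -2 log uᵢ`. Hence `-2 log G t = t + O(log t)`, and the exact slope of `q n` is the
almost sure limit of `T n / n`. Coordinatewise, a signal term contributes `λᵢ cᵢ`, while a null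
term is `o(n)` almost surely by Borel–Cantelli, as `P(pᵢ ≤ e^{-εn}) ≤ e^{-εn}` is summable.
-/

open Real Topology

instance isProbabilityMeasure_restrict_Icc_zero_one :
    IsProbabilityMeasure (volume.restrict (Icc (0 : ℝ) 1)) :=
  ⟨by simp⟩

noncomputable def softFisher {ι : Type*} [Fintype ι] (τ : ℝ) (u : ι → ℝ) : ℝ :=
  ∑ i, max (-2 * log (u i) + 2 * log τ) 0

noncomputable abbrev unitCube (ι : Type*) [Fintype ι] : Measure (ι → ℝ) :=
  Measure.pi fun _ => volume.restrict (Icc (0 : ℝ) 1)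

section SurvivalBounds

variable {ι : Type*} [Fintype ι] {τ t : ℝ}

lemma softFisher_nonneg (τ : ℝ) (u : ι → ℝ) : 0 ≤ softFisher τ u :=
  Finset.sum_nonneg fun _ _ => le_max_right _ _

lemma softFisher_le_fisher (hτ : τ ∈ Icc 0 1) {u : ι → ℝ} (hu : ∀ i, u i ∈ Icc (0 : ℝ) 1) :
    softFisher τ u ≤ ∑ i, -2 * log (u i) := by
  refine Finset.sum_le_sum fun i _ => max_le ?_ ?_
  · linarith [log_nonpos hτ.1 hτ.2]
  · linarith [log_nonpos (hu i).1 (hu i).2]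

lemma ae_unitCube_mem_Icc : ∀ᵐ u ∂unitCube ι, ∀ i, u i ∈ Icc (0 : ℝ) 1 :=
  ae_all_iff.2 fun i =>
    (Measure.quasiMeasurePreserving_eval _ i).ae (ae_restrict_mem measurableSet_Icc)

lemma rpow_neg_eqOn_exp_neg_mul_log (s : ℝ) :
    EqOn (fun x : ℝ => x ^ (-s)) (fun x => exp (-(s * log x))) (Ioi 0) := fun x hx => by
  simp only [rpow_def_of_pos (mem_Ioi.1 hx), neg_mul, mul_comm]

lemma integrableOn_exp_neg_mul_log {s : ℝ} (hs : s < 1) :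
    IntegrableOn (fun x => exp (-(s * log x))) (Icc 0 1) := by
  have hrpow := intervalIntegral.intervalIntegrable_rpow' (a := 0) (b := 1) (r := -s) (by linarith)
  rw [intervalIntegrable_iff_integrableOn_Ioc_of_le zero_le_one] at hrpow
  rw [integrableOn_Icc_iff_integrableOn_Ioc]
  exact hrpow.congr_fun ((rpow_neg_eqOn_exp_neg_mul_log s).mono Ioc_subset_Ioi_self)
    measurableSet_Ioc

lemma integral_exp_neg_mul_log {s : ℝ} (hs : s < 1) :
    ∫ x in Icc (0 : ℝ) 1, exp (-(s * log x)) = 1 / (1 - s) := by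
  rw [integral_Icc_eq_integral_Ioc, ← setIntegral_congr_fun measurableSet_Ioc
    ((rpow_neg_eqOn_exp_neg_mul_log s).mono Ioc_subset_Ioi_self),
    ← intervalIntegral.integral_of_le zero_le_one, integral_rpow (Or.inl (by linarith)),
    one_rpow, zero_rpow (by linarith)]
  ring

lemma le_measureReal_softFisher [Nonempty ι] (hτ : τ ∈ Ioc 0 1) (ht : 0 ≤ t) :
    τ * exp (-(t / 2)) ≤ (unitCube ι).real {u | t ≤ softFisher τ u} := by
  classical
  obtain ⟨i₀⟩ := ‹Nonempty ι›
  set a := τ * exp (-(t / 2))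
  have ha : a ∈ Ioc 0 1 := ⟨mul_pos hτ.1 (exp_pos _), mul_le_one₀ hτ.2 (by positivity)
    (exp_le_one_iff.2 (by linarith))⟩
  have hbox : univ.pi (Function.update (fun _ => Icc (0 : ℝ) 1) i₀ (Ioc 0 a)) ⊆
      {u | t ≤ softFisher τ u} := by
    intro u hu
    have hu₀ : u i₀ ∈ Ioc 0 a := by simpa using hu i₀ (mem_univ _)
    have hlog : log (u i₀) ≤ log τ - t / 2 := by
      calc log (u i₀) ≤ log a := log_le_log hu₀.1 hu₀.2
        _ = log τ - t / 2 := by rw [log_mul hτ.1.ne' (exp_pos _).ne', log_exp]; ring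
    calc t ≤ max (-2 * log (u i₀) + 2 * log τ) 0 := le_max_of_le_left (by linarith)
      _ ≤ softFisher τ u :=
          Finset.single_le_sum (f := fun i => max (-2 * log (u i) + 2 * log τ) 0)
            (fun i _ => le_max_right _ _) (Finset.mem_univ i₀)
  refine le_of_eq_of_le ?_ (measureReal_mono hbox)
  rw [measureReal_def, Measure.pi_pi,
    Finset.prod_eq_single i₀ (fun i _ hi => by simp [hi]) (by simp), Function.update_self, Measure.restrict_apply measurableSet_Ioc,
    inter_eq_left.2 (Ioc_subset_Icc_self.trans (Icc_subset_Icc_right ha.2)), Real.volume_Ioc,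
    sub_zero, ENNReal.toReal_ofReal ha.1.le]

lemma measureReal_softFisher_le (hτ : τ ∈ Icc 0 1) (ht : 1 < t) :
    (unitCube ι).real {u | t ≤ softFisher τ u} ≤ exp ((1 - t) / 2) * t ^ Fintype.card ι := by
  have ht₀ : 0 < t := by linarith
  set s := 1 - 1 / t with hs
  have hs₀ : 0 ≤ s := sub_nonneg.2 ((div_le_one ht₀).2 ht.le)
  have hs₁ : s < 1 := sub_lt_self _ (by positivity)
  set f : (ι → ℝ) → ℝ := fun u => ∏ i, exp (-(s * log (u i)))
  have hf_int : Integrable f (unitCube ι) :=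
    Integrable.fintype_prod fun _ => integrableOn_exp_neg_mul_log hs₁
  have hf_integral : ∫ u, f u ∂unitCube ι = t ^ Fintype.card ι := by
    rw [integral_fintype_prod_eq_pow (fun x => exp (-(s * log x))),
      integral_exp_neg_mul_log hs₁, hs, sub_sub_cancel, one_div_one_div]
  have hsub : {u | t ≤ softFisher τ u} ≤ᵐ[unitCube ι] {u | exp (s * t / 2) ≤ f u} := by
    filter_upwards [ae_unitCube_mem_Icc] with u hu htu
    have htu : t ≤ ∑ i, -2 * log (u i) := (show t ≤ softFisher τ u from htu).trans
      (softFisher_le_fisher hτ hu)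
    calc exp (s * t / 2) = exp (s / 2 * t) := by ring_nf
      _ ≤ exp (s / 2 * ∑ i, -2 * log (u i)) := by gcongr
      _ = f u := by
          rw [Finset.mul_sum, exp_sum]
          exact Finset.prod_congr rfl fun i _ => by ring_nf
  have hmarkov := mul_meas_ge_le_integral_of_nonneg
    (ae_of_all _ fun u => Finset.prod_nonneg fun i _ => (exp_pos _).le) hf_int (exp (s * t / 2))
  calc (unitCube ι).real {u | t ≤ softFisher τ u}
      ≤ (unitCube ι).real {u | exp (s * t / 2) ≤ f u} :=
        ENNReal.toReal_mono (measure_ne_top _ _) (measure_mono_ae hsub)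
    _ ≤ t ^ Fintype.card ι / exp (s * t / 2) := by
        rw [le_div_iff₀' (exp_pos _)]; linarith
    _ = exp ((1 - t) / 2) * t ^ Fintype.card ι := by
        rw [div_eq_mul_inv, ← exp_neg, mul_comm]
        congr 2
        rw [hs]
        field_simp
        ring

end SurvivalBounds

section ExactSlope

variable {T : ℕ → ℝ} {L : ℝ}

lemma tendsto_atTop_of_tendsto_div_natCast (hL : 0 < L)
    (hT : Tendsto (fun n => T n / n) atTop (𝓝 L)) : Tendsto T atTop atTop := by
  refine (hT.pos_mul_atTop hL tendsto_natCast_atTop_atTop).congr' ?_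
  filter_upwards [eventually_ne_atTop 0] with n hn
  field_simp

lemma tendsto_log_div_natCast_of_tendsto_div (hL : 0 < L)
    (hT : Tendsto (fun n => T n / n) atTop (𝓝 L)) :
    Tendsto (fun n => log (T n) / n) atTop (𝓝 0) := by
  have hT_top := tendsto_atTop_of_tendsto_div_natCast hL hT
  have h := (isLittleO_log_id_atTop.comp_tendsto hT_top).tendsto_div_nhds_zero.mul hT
  rw [zero_mul] at h
  refine h.congr' ?_
  filter_upwards [hT_top.eventually_ne_atTop 0] with n hn
  simp only [Function.comp_apply, id, div_mul_div_cancel₀ hn]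

lemma tendsto_neg_two_div_mul_log_of_tail_bounds_s10 {G : ℝ → ℝ} {τ : ℝ} {K : ℕ} (hτ : 0 < τ)
    (hlow : ∀ t, 0 ≤ t → τ * exp (-(t / 2)) ≤ G t)
    (hup : ∀ t, 1 < t → G t ≤ exp ((1 - t) / 2) * t ^ K)
    (hL : 0 < L) (hT₀ : ∀ n, 0 ≤ T n) (hT : Tendsto (fun n => T n / n) atTop (𝓝 L)) :
    Tendsto (fun n : ℕ => -(2 / (n : ℝ)) * log (G (T n))) atTop (𝓝 L) := by
  have hG_pos : ∀ t, 0 ≤ t → 0 < G t := fun t ht => (mul_pos hτ (exp_pos _)).trans_le (hlow t ht)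
  have hupper : ∀ t, 0 ≤ t → -2 * log (G t) ≤ t - 2 * log τ := fun t ht => by
    have := log_le_log (mul_pos hτ (exp_pos _)) (hlow t ht)
    rw [log_mul hτ.ne' (exp_pos _).ne', log_exp] at this
    linarith
  have hlower : ∀ t, 1 < t → t - 1 - 2 * K * log t ≤ -2 * log (G t) := fun t ht => by
    have := log_le_log (hG_pos t (by linarith)) (hup t ht)
    rw [log_mul (exp_pos _).ne' (by positivity), log_exp, log_pow] at this
    linarith
  have hlim_up : Tendsto (fun n : ℕ => (T n - 2 * log τ) / n) atTop (𝓝 L) := by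
    simpa only [sub_div, sub_zero] using hT.sub (tendsto_const_div_atTop_nhds_zero_nat _)
  have hlim_low : Tendsto (fun n : ℕ => (T n - 1 - 2 * K * log (T n)) / n) atTop (𝓝 L) := by
    simpa only [sub_div, sub_zero, mul_zero, mul_div_assoc] using
      (hT.sub (tendsto_const_div_atTop_nhds_zero_nat 1)).sub
        ((tendsto_log_div_natCast_of_tendsto_div hL hT).const_mul (2 * (K : ℝ)))
  have hrw : ∀ n : ℕ, -(2 / (n : ℝ)) * log (G (T n)) = -2 * log (G (T n)) / n := fun n => by
    ring
  simp only [hrw]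
  refine tendsto_of_tendsto_of_tendsto_of_le_of_le' hlim_low hlim_up ?_ ?_
  · filter_upwards [(tendsto_atTop_of_tendsto_div_natCast hL hT).eventually_gt_atTop 1]
      with n hn
    exact div_le_div_of_nonneg_right (hlower _ hn) n.cast_nonneg
  · exact Eventually.of_forall fun n =>
      div_le_div_of_nonneg_right (hupper _ (hT₀ n)) n.cast_nonneg

end ExactSlope

section Coordinates

variable {Ω : Type*} [MeasurableSpace Ω] {μ : Measure Ω}

lemma tendsto_div_of_tendsto_ratio {α : Type*} {l : Filter α} {y m d : α → ℝ} {lam c : ℝ}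
    (hlam : lam ≠ 0) (hm : Tendsto (fun a => m a / d a) l (𝓝 lam))
    (hy : Tendsto (fun a => y a / m a) l (𝓝 c)) :
    Tendsto (fun a => y a / d a) l (𝓝 (lam * c)) := by
  refine (hm.mul hy).congr' ?_
  filter_upwards [hm.eventually_ne hlam] with a ha
  rw [mul_comm, div_mul_div_cancel₀ (div_ne_zero_iff.1 ha).1]

lemma tendsto_max_div_natCast {y : ℕ → ℝ} {a : ℝ}
    (hy : Tendsto (fun n => y n / n) atTop (𝓝 a)) :
    Tendsto (fun n => max (y n) 0 / n) atTop (𝓝 (max a 0)) :=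
  (hy.max tendsto_const_nhds).congr fun n => by
    rw [← zero_div (n : ℝ), max_div_div_right n.cast_nonneg, zero_div]

lemma tendsto_max_add_const_div_natCast {y : ℕ → ℝ} {a : ℝ} (b : ℝ)
    (hy : Tendsto (fun n => max (y n) 0 / n) atTop (𝓝 a)) :
    Tendsto (fun n => max (y n + b) 0 / n) atTop (𝓝 a) := by
  have hshift : Tendsto (fun n : ℕ => max (y n + b) 0 / n - max (y n) 0 / n) atTop (𝓝 0) := by
    refine squeeze_zero_norm (fun n => ?_) (tendsto_const_div_atTop_nhds_zero_nat |b|)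
    rw [← sub_div, norm_div, Real.norm_natCast, Real.norm_eq_abs]
    refine div_le_div_of_nonneg_right ?_ n.cast_nonneg
    simpa only [add_sub_cancel_left] using abs_max_sub_max_le_abs (y n + b) (y n) 0
  simpa using hy.add hshift

lemma measure_setOf_le_le_of_map_eq_uniform {X : Ω → ℝ} (hX : Measurable X) (hlaw : μ.map X = volume.restrict (Ioo 0 1)) (x : ℝ) :
    μ {ω | X ω ≤ x} ≤ ENNReal.ofReal x :=
  calc μ {ω | X ω ≤ x} = volume (Iic x ∩ Ioo 0 1) := by
        rw [← Measure.restrict_apply measurableSet_Iic, ← hlaw,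
          Measure.map_apply hX measurableSet_Iic]
        rfl
    _ ≤ volume (Ioc 0 x) := measure_mono fun y hy => ⟨hy.2.1, hy.1⟩
    _ = ENNReal.ofReal x := by rw [volume_Ioc, sub_zero]

lemma ae_tendsto_max_neg_log_div_natCast {X : ℕ → Ω → ℝ} (hX : ∀ n x, μ {ω | X n ω ≤ x} ≤ ENNReal.ofReal x) :
    ∀ᵐ ω ∂μ, Tendsto (fun n : ℕ => max (-log (X n ω)) 0 / n) atTop (𝓝 0) := by
  have hBC : ∀ k : ℕ, ∀ᵐ ω ∂μ, ∀ᶠ n : ℕ in atTop, exp (-(n / (k + 1))) < X n ω := by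
    intro k
    set r := ENNReal.ofReal (exp (-(1 / (k + 1))))
    have hr : r < 1 := ENNReal.ofReal_lt_one.2 (exp_lt_one_iff.2 (by simp; positivity))
    have hμ : ∀ n : ℕ, μ {ω | X n ω ≤ exp (-(n / (k + 1)))} ≤ r ^ n := fun n => by
      refine (hX n _).trans_eq ?_
      rw [← ENNReal.ofReal_pow (exp_nonneg _), ← exp_nat_mul]
      ring_nf
    have hsum := ne_top_of_le_ne_top (tsum_geometric_lt_top.2 hr).ne
      (ENNReal.tsum_le_tsum hμ)
    filter_upwards [ae_eventually_notMem hsum] with ω hω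
    filter_upwards [hω] with n hn using not_le.1 hn
  filter_upwards [ae_all_iff.2 hBC] with ω hω
  rw [Metric.nhds_basis_ball_inv_nat_succ.tendsto_right_iff]
  intro k _
  filter_upwards [hω k, eventually_gt_atTop 0] with n hn hn₀
  have hlog : -(n / (k + 1) : ℝ) < log (X n ω) := (lt_log_iff_exp_lt ((exp_pos _).trans hn)).2 hn
  rw [Metric.mem_ball, dist_zero_right, norm_of_nonneg (by positivity), div_lt_iff₀ (by positivity)]
  refine max_lt ?_ (by positivity)
  calc -log (X n ω) < n / (k + 1) := by linarith
    _ = 1 / (k + 1) * n := by ring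

lemma ae_tendsto_max_neg_two_mul_log_div_of_uniform {X : ℕ → Ω → ℝ} (hX : ∀ n, Measurable (X n))
    (hlaw : ∀ n, μ.map (X n) = volume.restrict (Ioo 0 1)) :
    ∀ᵐ ω ∂μ, Tendsto (fun n : ℕ => max (-2 * log (X n ω)) 0 / n) atTop (𝓝 0) := by
  filter_upwards [ae_tendsto_max_neg_log_div_natCast fun n =>
    measure_setOf_le_le_of_map_eq_uniform (hX n) (hlaw n)] with ω hω
  simpa only [mul_zero] using (hω.const_mul 2).congr fun n => by
    rw [← mul_div_assoc, mul_max_of_nonneg _ _ zero_le_two, mul_zero, mul_neg, neg_mul]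

lemma tendsto_max_neg_two_mul_log_div_of_slope {m : ℕ → ℕ} {lam c : ℝ} (hlam : 0 < lam)
    (hc : 0 ≤ c) (hm : Tendsto (fun n : ℕ => (m n : ℝ) / n) atTop (𝓝 lam)) {x : ℕ → ℝ}
    (hx : Tendsto (fun n : ℕ => -(2 / (m n : ℝ)) * log (x n)) atTop (𝓝 c)) :
    Tendsto (fun n : ℕ => max (-2 * log (x n)) 0 / n) atTop (𝓝 (lam * c)) := by
  rw [← max_eq_left (mul_nonneg hlam.le hc)]
  exact tendsto_max_div_natCast
    (tendsto_div_of_tendsto_ratio hlam.ne' hm (hx.congr fun n => by ring))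

end Coordinates

theorem TFsoft_is_ABO_general
    {K : ℕ} (hK : 1 ≤ K) (ℓ : ℕ) (hℓ : 1 ≤ ℓ)
    (lam c : Fin K → ℝ)
    (hlam : ∀ i, 0 < lam i)
    (hcpos : ∀ i : Fin K, (i : ℕ) < ℓ → 0 < c i)
    (hcnull : ∀ i : Fin K, ℓ ≤ (i : ℕ) → c i = 0)
    (nseq : Fin K → ℕ → ℕ)
    (hn : ∀ i, Tendsto (fun n : ℕ => (nseq i n : ℝ) / (n : ℝ)) atTop (nhds (lam i)))
    {Ω : Type*} [MeasurableSpace Ω] (μ : Measure Ω)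
    (p : ℕ → Fin K → Ω → ℝ)
    (hmeas : ∀ n i, Measurable (p n i))
    (hslope : ∀ i : Fin K, (i : ℕ) < ℓ →
      ∀ᵐ ω ∂μ, Tendsto (fun n : ℕ => -(2 / (nseq i n : ℝ)) * Real.log (p n i ω))
        atTop (nhds (c i)))
    (hnull : ∀ i : Fin K, ℓ ≤ (i : ℕ) →
      ∀ n, Measure.map (p n i) μ = volume.restrict (Ioo (0 : ℝ) 1))
    (τ : ℝ) (hτ : τ ∈ Ioc (0 : ℝ) 1)
    -- the TFsoft statistic
    (T : (Fin K → ℝ) → ℝ)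
    (hT : ∀ u : Fin K → ℝ, T u =
      ∑ i : Fin K, max (-2 * Real.log (u i) + 2 * Real.log τ) 0)
    -- the null survival function of `T` under the uniform measure on [0,1]^K
    (G : ℝ → ℝ)
    (hG : ∀ t, G t =
      ((Measure.pi fun _ : Fin K => volume.restrict (Icc (0 : ℝ) 1))
        {u | t ≤ T u}).toReal)
    -- the TFsoft combined p-value
    (q : ℕ → Ω → ℝ)
    (hq : ∀ n ω, q n ω = G (T (fun i => p n i ω))) :
    ∀ᵐ ω ∂μ, Tendsto (fun n : ℕ => -(2 / (n : ℝ)) * Real.log (q n ω))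
      atTop (nhds (∑ i : Fin K, lam i * c i)) := by
  obtain rfl : T = softFisher τ := funext hT
  have : Nonempty (Fin K) := ⟨⟨0, hK⟩⟩
  have hlc : ∀ i, 0 ≤ lam i * c i := fun i => by
    rcases lt_or_ge (i : ℕ) ℓ with hi | hi
    · exact (mul_pos (hlam i) (hcpos i hi)).le
    · rw [hcnull i hi, mul_zero]
  have hcoord : ∀ i, ∀ᵐ ω ∂μ,
      Tendsto (fun n : ℕ => max (-2 * log (p n i ω)) 0 / n) atTop (𝓝 (lam i * c i)) := fun i => by
    rcases lt_or_ge (i : ℕ) ℓ with hi | hi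
    · filter_upwards [hslope i hi] with ω hω
      exact tendsto_max_neg_two_mul_log_div_of_slope (hlam i) (hcpos i hi).le (hn i) hω
    · rw [hcnull i hi, mul_zero]
      exact ae_tendsto_max_neg_two_mul_log_div_of_uniform (hmeas · i) (hnull i hi)
  have hL : 0 < ∑ i, lam i * c i := Finset.sum_pos' (fun i _ => hlc i)
    ⟨⟨0, hK⟩, Finset.mem_univ _, mul_pos (hlam _) (hcpos _ hℓ)⟩
  filter_upwards [ae_all_iff.2 hcoord] with ω hω
  have hlim : Tendsto (fun n : ℕ => softFisher τ (fun i => p n i ω) / n) atTop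
      (𝓝 (∑ i, lam i * c i)) := by
    simpa only [softFisher, Finset.sum_div] using tendsto_finsetSum Finset.univ
      fun i _ => tendsto_max_add_const_div_natCast (2 * log τ) (hω i)
  have hG_low (t : ℝ) (ht : 0 ≤ t) : τ * exp (-(t / 2)) ≤ G t := by
    rw [hG]; exact le_measureReal_softFisher hτ ht
  have hG_up (t : ℝ) (ht : 1 < t) : G t ≤ exp ((1 - t) / 2) * t ^ K := by
    have h := measureReal_softFisher_le (ι := Fin K) (Ioc_subset_Icc_self hτ) ht
    rw [Fintype.card_fin] at h
    rw [hG]; exact h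
  simpa only [hq] using tendsto_neg_two_div_mul_log_of_tail_bounds_s10 hτ.1 hG_low hG_up hL
    (fun n => softFisher_nonneg _ _) hlim

/-- The soft-thresholded truncated Fisher method (TFsoft) is asymptotically Bahadur
optimal for every threshold `τ ∈ (0,1]`: its combined p-value has exact slope
`∑ i, λ i * c i`, the maximum attainable exact slope. -/
theorem TFsoft_is_ABO
    {K : ℕ} (hK : 1 ≤ K) (ℓ : ℕ) (hℓ : 1 ≤ ℓ) (hℓK : ℓ ≤ K)
    (lam c : Fin K → ℝ)
    (hlam : ∀ i, 0 < lam i)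
    (hcpos : ∀ i : Fin K, (i : ℕ) < ℓ → 0 < c i)
    (hcnull : ∀ i : Fin K, ℓ ≤ (i : ℕ) → c i = 0)
    (nseq : Fin K → ℕ → ℕ)
    (hn : ∀ i, Tendsto (fun n : ℕ => (nseq i n : ℝ) / (n : ℝ)) atTop (nhds (lam i)))
    {Ω : Type*} [MeasurableSpace Ω] (μ : Measure Ω) [IsProbabilityMeasure μ]
    (p : ℕ → Fin K → Ω → ℝ)
    (hmeas : ∀ n i, Measurable (p n i))
    (hval : ∀ n i ω, p n i ω ∈ Ioo (0 : ℝ) 1)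
    (hslope : ∀ i : Fin K, (i : ℕ) < ℓ →
      ∀ᵐ ω ∂μ, Tendsto (fun n : ℕ => -(2 / (nseq i n : ℝ)) * Real.log (p n i ω))
        atTop (nhds (c i)))
    (hnull : ∀ i : Fin K, ℓ ≤ (i : ℕ) →
      ∀ n, Measure.map (p n i) μ = volume.restrict (Ioo (0 : ℝ) 1))
    (τ : ℝ) (hτ : τ ∈ Ioc (0 : ℝ) 1)
    -- the TFsoft statistic
    (T : (Fin K → ℝ) → ℝ)
    (hT : ∀ u : Fin K → ℝ, T u =
      ∑ i : Fin K, max (-2 * Real.log (u i) + 2 * Real.log τ) 0)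
    -- the null survival function of `T` under the uniform measure on [0,1]^K
    (G : ℝ → ℝ)
    (hG : ∀ t, G t =
      ((Measure.pi fun _ : Fin K => volume.restrict (Icc (0 : ℝ) 1))
        {u | t ≤ T u}).toReal)
    -- the TFsoft combined p-value
    (q : ℕ → Ω → ℝ)
    (hq : ∀ n ω, q n ω = G (T (fun i => p n i ω))) :
    ∀ᵐ ω ∂μ, Tendsto (fun n : ℕ => -(2 / (n : ℝ)) * Real.log (q n ω))
      atTop (nhds (∑ i : Fin K, lam i * c i)) :=
  TFsoft_is_ABO_general hK ℓ hℓ lam c hlam hcpos hcnull nseq hn μ p hmeas hslope hnull τ hτ T hT G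
    hG q hq
end

section
/- Fix an integer K ≥ 1 and τ ∈ (0,1]. Define, for u ∈ (0,1)^K, the truncated Fisher statistics T_hard(u) = ∑_{i=1}^K (−2·log u_i)·1{u_i ≤ τ} and T_soft(u) = ∑_{i=1}^K max(−2·log u_i + 2·log τ, 0), and their null survival functions G_hard(t) = μ_K{u : T_hard(u) ≥ t} and G_soft(t) = μ_K{u : T_soft(u) ≥ t}. Then log(G_hard(t))/t → −1/2 and log(G_soft(t))/t → −1/2 as t → ∞. -/
open MeasureTheory Filter Set ProbabilityTheory
open scoped ENNReal Topology

/-! Write `S(u) = ∑ᵢ max (-2 log uᵢ + 2 log τ) 0`. A single coordinate below `τ e^{-t/2}` already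
forces `S ≥ t`, so `G_soft(t) ≥ τ e^{-t/2}`. Conversely each summand has exponential moment
`E e^{l·max(…)} ≤ 1 + 1/(1 - 2l)` for `0 < l < 1/2`, and the Chernoff bound for the sum of `K`
independent copies gives `G_soft(t) ≤ C_l e^{-lt}`; together `log G_soft(t) / t → -1/2`.
Termwise on the cube, `T_soft ≤ T_hard ≤ T_soft - 2K log τ`, so `G_soft(t) ≤ G_hard(t) ≤
G_soft(t + 2K log τ)` and the hard statistic inherits both bounds. -/

section

open Real

theorem tendsto_log_div_of_exp_bounds_s11 {G : ℝ → ℝ} {a r : ℝ} (ha : 0 < a) (hr : 0 < r)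
    (hlow : ∀ᶠ t in atTop, a * exp (-(r * t)) ≤ G t)
    (hupp : ∀ l ∈ Ioo 0 r, ∃ C, ∀ᶠ t in atTop, G t ≤ C * exp (-(l * t))) :
    Tendsto (fun t => log (G t) / t) atTop (𝓝 (-r)) := by
  have hdecay (c s : ℝ) : Tendsto (fun t => log c / t - s) atTop (𝓝 (-s)) := by
    simpa using (tendsto_const_nhds.div_atTop tendsto_id).sub_const s
  refine tendsto_order.2 ⟨fun b hb => ?_, fun b hb => ?_⟩
  · filter_upwards [(hdecay a r).eventually (lt_mem_nhds hb), hlow, eventually_gt_atTop 0]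
      with t hbt hGt ht
    refine hbt.trans_le ?_
    have hlog := log_le_log (by positivity) hGt
    rw [log_mul ha.ne' (exp_pos _).ne', log_exp, ← sub_eq_add_neg] at hlog
    calc log a / t - r = (log a - r * t) / t := by field_simp
      _ ≤ log (G t) / t := by gcongr
  · obtain ⟨l, hlb, hlr⟩ := exists_between (max_lt hr (neg_lt.1 hb))
    obtain ⟨C, hC⟩ := hupp l ⟨(le_max_left _ _).trans_lt hlb, hlr⟩
    have hlb' : -l < b := neg_lt.1 ((le_max_right _ _).trans_lt hlb)
    filter_upwards [(hdecay C l).eventually (gt_mem_nhds hlb'), hC, hlow, eventually_gt_atTop 0]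
      with t hbt hGt hGt' ht
    refine lt_of_le_of_lt ?_ hbt
    have hG0 : 0 < G t := lt_of_lt_of_le (by positivity) hGt'
    have hC0 : C ≠ 0 := by rintro rfl; linarith
    have hlog := log_le_log hG0 hGt
    rw [log_mul hC0 (exp_pos _).ne', log_exp, ← sub_eq_add_neg] at hlog
    calc log (G t) / t ≤ (log C - l * t) / t := by gcongr
      _ = log C / t - l := by field_simp

theorem tendsto_log_toReal_div_of_exp_bounds {G : ℝ → ℝ≥0∞} {a r : ℝ} (ha : 0 < a) (hr : 0 < r)
    (hlow : ∀ᶠ t in atTop, ENNReal.ofReal (a * exp (-(r * t))) ≤ G t)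
    (hupp : ∀ l ∈ Ioo 0 r, ∃ C, ∀ᶠ t in atTop, G t ≤ ENNReal.ofReal (C * exp (-(l * t)))) :
    Tendsto (fun t => log (G t).toReal / t) atTop (𝓝 (-r)) := by
  refine tendsto_log_div_of_exp_bounds_s11 ha hr ?_ fun l hl => ?_
  · -- any one of the upper bounds shows that `G` is eventually finite
    obtain ⟨C, hC⟩ := hupp (r / 2) ⟨by positivity, by linarith⟩
    filter_upwards [hlow, hC] with t hlo hup
    exact (ENNReal.ofReal_le_iff_le_toReal (ne_top_of_le_ne_top ENNReal.ofReal_ne_top hup)).1 hlo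
  · obtain ⟨C, hC⟩ := hupp l hl
    refine ⟨C, ?_⟩
    filter_upwards [hlow, hC] with t hlo hup
    have hpos : 0 < C * exp (-(l * t)) :=
      ENNReal.ofReal_pos.1 ((ENNReal.ofReal_pos.2 (by positivity)).trans_le (hlo.trans hup))
    exact ENNReal.toReal_le_of_le_ofReal hpos.le hup

theorem lintegral_pi_prod_eq_pow {ι Ω : Type*} [Fintype ι] [MeasurableSpace Ω] (ν : Measure Ω)
    [IsProbabilityMeasure ν] {f : Ω → ℝ≥0∞} (hf : Measurable f) :
    ∫⁻ u, ∏ i, f (u i) ∂Measure.pi (fun _ : ι => ν) = (∫⁻ x, f x ∂ν) ^ Fintype.card ι := by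
  rw [lintegral_prod_eq_prod_lintegral_of_indepFun _ _
      (iIndepFun_pi fun _ => hf.aemeasurable) fun i => hf.comp (measurable_pi_apply i)]
  simp_rw [(measurePreserving_eval (fun _ : ι => ν) _).lintegral_comp hf]
  rw [Finset.prod_const, Finset.card_univ]

theorem measure_le_le_exp_mul_lintegral_exp {α : Type*} [MeasurableSpace α] (μ : Measure α)
    {X : α → ℝ} (hX : AEMeasurable X μ) {l : ℝ} (hl : 0 < l) (t : ℝ) :
    μ {ω | t ≤ X ω} ≤
      ENNReal.ofReal (exp (-(l * t))) * ∫⁻ ω, ENNReal.ofReal (exp (l * X ω)) ∂μ := by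
  have hsub : {ω | t ≤ X ω} ⊆ {ω | ENNReal.ofReal (exp (l * t)) ≤ ENNReal.ofReal (exp (l * X ω))} :=
    fun ω hω => ENNReal.ofReal_le_ofReal (exp_le_exp.2 (mul_le_mul_of_nonneg_left hω hl.le))
  refine (measure_mono hsub).trans ((meas_ge_le_lintegral_div (by fun_prop)
    (ENNReal.ofReal_pos.2 (exp_pos _)).ne' ENNReal.ofReal_ne_top).trans_eq ?_)
  rw [ENNReal.div_eq_inv_mul, exp_neg, ENNReal.ofReal_inv_of_pos (exp_pos _)]

theorem measure_le_measure_pi_le_sum {ι Ω : Type*} [Fintype ι] [MeasurableSpace Ω] (ν : Measure Ω)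
    [IsProbabilityMeasure ν] {f : Ω → ℝ} (hf : Measurable f) (hf0 : ∀ x, 0 ≤ f x) (i : ι) (t : ℝ) :
    ν {x | t ≤ f x} ≤ Measure.pi (fun _ : ι => ν) {u | t ≤ ∑ j, f (u j)} := by
  rw [← (measurePreserving_eval (fun _ : ι => ν) i).measure_preimage
    (measurableSet_le measurable_const hf).nullMeasurableSet]
  exact measure_mono fun u hu => le_trans hu
    (Finset.single_le_sum (fun j _ => hf0 (u j)) (Finset.mem_univ i))

instance inst_s11 : IsProbabilityMeasure (volume.restrict (Icc (0 : ℝ) 1)) := ⟨by simp⟩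

theorem lintegral_Ioc_rpow {s : ℝ} (hs : -1 < s) :
    ∫⁻ x in Ioc (0 : ℝ) 1, ENNReal.ofReal (x ^ s) = ENNReal.ofReal (1 / (s + 1)) := by
  have hint : IntegrableOn (fun x : ℝ => x ^ s) (Ioc 0 1) := by
    simpa [intervalIntegrable_iff_integrableOn_Ioc_of_le zero_le_one]
      using intervalIntegral.intervalIntegrable_rpow' (a := 0) (b := 1) hs
  rw [← ofReal_integral_eq_lintegral_ofReal hint
    (ae_restrict_of_forall_mem measurableSet_Ioc fun x hx => rpow_nonneg hx.1.le _),
    ← intervalIntegral.integral_of_le zero_le_one, integral_rpow (Or.inl hs),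
    one_rpow, zero_rpow (by linarith), sub_zero]

end

namespace TruncatedFisher

open Real

noncomputable def softTerm (τ x : ℝ) : ℝ := max (-2 * log x + 2 * log τ) 0

noncomputable def hardTerm (τ x : ℝ) : ℝ := if x ≤ τ then -2 * log x else 0

variable {τ : ℝ}

theorem softTerm_nonneg (x : ℝ) : 0 ≤ softTerm τ x := le_max_right _ _

@[fun_prop]
theorem measurable_softTerm : Measurable fun x => softTerm τ x := by
  unfold softTerm; fun_prop

theorem softTerm_le_hardTerm (hτ0 : 0 < τ) (hτ1 : τ ≤ 1) {x : ℝ} (hx : 0 ≤ x) :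
    softTerm τ x ≤ hardTerm τ x := by
  unfold softTerm hardTerm
  split_ifs with hxτ
  · have := log_nonpos hx (hxτ.trans hτ1)
    have := log_nonpos hτ0.le hτ1
    exact max_le (by linarith) (by linarith)
  · have := log_le_log hτ0 (not_le.1 hxτ).le
    exact max_le (by linarith) le_rfl

theorem hardTerm_le_softTerm_sub (hτ0 : 0 ≤ τ) (hτ1 : τ ≤ 1) (x : ℝ) :
    hardTerm τ x ≤ softTerm τ x - 2 * log τ := by
  unfold softTerm hardTerm
  have := log_nonpos hτ0 hτ1
  split_ifs
  · linarith [le_max_left (-2 * log x + 2 * log τ) 0]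
  · linarith [le_max_right (-2 * log x + 2 * log τ) 0]

theorem lintegral_exp_mul_softTerm_le (hτ0 : 0 ≤ τ) (hτ1 : τ ≤ 1) {l : ℝ} (hl0 : 0 ≤ l)
    (hl : l < 1 / 2) :
    ∫⁻ x in Icc 0 1, ENNReal.ofReal (exp (l * softTerm τ x)) ≤
      ENNReal.ofReal (1 + 1 / (1 - 2 * l)) := by
  have hpt : ∀ x ∈ Ioc (0 : ℝ) 1,
      ENNReal.ofReal (exp (l * softTerm τ x)) ≤ 1 + ENNReal.ofReal (x ^ (-(2 * l))) := by
    intro x hx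
    have hlogτ := log_nonpos hτ0 hτ1
    have hexp : exp (l * (-2 * log x + 2 * log τ)) ≤ x ^ (-(2 * l)) := by
      rw [rpow_def_of_pos hx.1, exp_le_exp]
      nlinarith
    rw [← ENNReal.ofReal_one, ← ENNReal.ofReal_add zero_le_one (rpow_nonneg hx.1.le _)]
    refine ENNReal.ofReal_le_ofReal ?_
    rw [softTerm, mul_max_of_nonneg _ _ hl0, mul_zero, exp_monotone.map_max, exp_zero]
    exact max_le (by linarith [exp_pos (l * (-2 * log x + 2 * log τ))])
      (by linarith [rpow_nonneg hx.1.le (-(2 * l))])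
  calc ∫⁻ x in Icc 0 1, ENNReal.ofReal (exp (l * softTerm τ x))
      = ∫⁻ x in Ioc 0 1, ENNReal.ofReal (exp (l * softTerm τ x)) :=
        setLIntegral_congr Ioc_ae_eq_Icc.symm
    _ ≤ ∫⁻ x in Ioc 0 1, (1 + ENNReal.ofReal (x ^ (-(2 * l)))) :=
        setLIntegral_mono (by fun_prop) hpt
    _ = 1 + ENNReal.ofReal (1 / (1 - 2 * l)) := by
        rw [lintegral_add_left measurable_const, setLIntegral_one, Real.volume_Ioc,
          lintegral_Ioc_rpow (by linarith), sub_zero, ENNReal.ofReal_one, neg_add_eq_sub]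
    _ = ENNReal.ofReal (1 + 1 / (1 - 2 * l)) := by
        rw [ENNReal.ofReal_add zero_le_one (one_div_nonneg.2 (by linarith)), ENNReal.ofReal_one]

theorem ofReal_le_volume_softTerm_ge (hτ0 : 0 < τ) (hτ1 : τ ≤ 1) {t : ℝ} (ht : 0 ≤ t) :
    ENNReal.ofReal (τ * exp (-(t / 2))) ≤ volume.restrict (Icc 0 1) {x | t ≤ softTerm τ x} := by
  set c := τ * exp (-(t / 2))
  have hc0 : 0 < c := by positivity
  have hc1 : c ≤ 1 := by
    have := exp_le_one_iff.2 (by linarith : -(t / 2) ≤ 0)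
    nlinarith
  have hsub : Ioc 0 c ⊆ {x | t ≤ softTerm τ x} := fun x hx => by
    have hlog := log_le_log hx.1 hx.2
    rw [log_mul hτ0.ne' (exp_pos _).ne', log_exp] at hlog
    exact le_max_of_le_left (by linarith : t ≤ -2 * log x + 2 * log τ)
  calc ENNReal.ofReal c = volume.restrict (Icc 0 1) (Ioc 0 c) := by
        rw [Measure.restrict_apply measurableSet_Ioc,
          inter_eq_self_of_subset_left (Ioc_subset_Icc_self.trans (Icc_subset_Icc le_rfl hc1)),
          Real.volume_Ioc, sub_zero]
    _ ≤ _ := measure_mono hsub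

noncomputable abbrev uniformCube (ι : Type*) [Fintype ι] : Measure (ι → ℝ) :=
  Measure.pi fun _ => volume.restrict (Icc 0 1)

variable {ι : Type*} [Fintype ι]

theorem ofReal_le_uniformCube_softSum_ge [Nonempty ι] (hτ0 : 0 < τ) (hτ1 : τ ≤ 1) {t : ℝ}
    (ht : 0 ≤ t) :
    ENNReal.ofReal (τ * exp (-(t / 2))) ≤
      uniformCube ι {u | t ≤ ∑ i, softTerm τ (u i)} :=
  (ofReal_le_volume_softTerm_ge hτ0 hτ1 ht).trans <| measure_le_measure_pi_le_sum _
    measurable_softTerm softTerm_nonneg (Classical.arbitrary ι) t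

theorem uniformCube_softSum_ge_le (hτ0 : 0 ≤ τ) (hτ1 : τ ≤ 1) {l : ℝ} (hl0 : 0 < l)
    (hl : l < 1 / 2) (t : ℝ) :
    uniformCube ι {u | t ≤ ∑ i, softTerm τ (u i)} ≤
      ENNReal.ofReal ((1 + 1 / (1 - 2 * l)) ^ Fintype.card ι * exp (-(l * t))) := by
  have hM : 0 ≤ 1 + 1 / (1 - 2 * l) := by
    have : 0 < 1 - 2 * l := by linarith
    positivity
  have hprod (u : ι → ℝ) : ENNReal.ofReal (exp (l * ∑ i, softTerm τ (u i))) =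
      ∏ i, ENNReal.ofReal (exp (l * softTerm τ (u i))) := by
    rw [Finset.mul_sum, exp_sum, ENNReal.ofReal_prod_of_nonneg fun _ _ => (exp_pos _).le]
  calc uniformCube ι {u | t ≤ ∑ i, softTerm τ (u i)}
      ≤ ENNReal.ofReal (exp (-(l * t))) *
          ∫⁻ u, ENNReal.ofReal (exp (l * ∑ i, softTerm τ (u i))) ∂uniformCube ι :=
        measure_le_le_exp_mul_lintegral_exp _ (Measurable.aemeasurable (by fun_prop)) hl0 t
    _ = ENNReal.ofReal (exp (-(l * t))) *
          (∫⁻ x in Icc 0 1, ENNReal.ofReal (exp (l * softTerm τ x))) ^ Fintype.card ι := by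
        simp_rw [hprod]
        exact congrArg _ (lintegral_pi_prod_eq_pow _
          (f := fun x => ENNReal.ofReal (exp (l * softTerm τ x))) (by fun_prop))
    _ ≤ ENNReal.ofReal (exp (-(l * t))) *
          ENNReal.ofReal (1 + 1 / (1 - 2 * l)) ^ Fintype.card ι := by
        gcongr
        exact lintegral_exp_mul_softTerm_le hτ0 hτ1 hl0.le hl
    _ = _ := by
        rw [← ENNReal.ofReal_pow hM, ← ENNReal.ofReal_mul (exp_pos _).le, mul_comm]

theorem uniformCube_softSum_ge_le_hardSum_ge (hτ0 : 0 < τ) (hτ1 : τ ≤ 1) (t : ℝ) :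
    uniformCube ι {u | t ≤ ∑ i, softTerm τ (u i)} ≤
      uniformCube ι {u | t ≤ ∑ i, hardTerm τ (u i)} := by
  have hcube : ∀ᵐ u ∂uniformCube ι, ∀ i, 0 ≤ u i := ae_all_iff.2 fun i =>
    (measurePreserving_eval _ i).quasiMeasurePreserving.ae
      ((ae_restrict_mem measurableSet_Icc).mono fun _ hx => hx.1)
  refine measure_mono_ae ?_
  filter_upwards [hcube] with u hu ht
  exact ht.trans (Finset.sum_le_sum fun i _ => softTerm_le_hardTerm hτ0 hτ1 (hu i))

theorem uniformCube_hardSum_ge_le_softSum_ge (hτ0 : 0 ≤ τ) (hτ1 : τ ≤ 1) (t : ℝ) :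
    uniformCube ι {u | t ≤ ∑ i, hardTerm τ (u i)} ≤
      uniformCube ι {u | t + 2 * Fintype.card ι * log τ ≤ ∑ i, softTerm τ (u i)} := by
  refine measure_mono fun u hu => ?_
  have := Finset.sum_le_sum fun i (_ : i ∈ Finset.univ) => hardTerm_le_softTerm_sub hτ0 hτ1 (u i)
  simp only [Finset.sum_sub_distrib, Finset.sum_const, Finset.card_univ, nsmul_eq_mul] at this
  simp only [mem_ofPred_eq] at hu ⊢
  linarith

theorem ofReal_le_uniformCube_hardSum_ge [Nonempty ι] (hτ0 : 0 < τ) (hτ1 : τ ≤ 1) {t : ℝ}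
    (ht : 0 ≤ t) :
    ENNReal.ofReal (τ * exp (-(t / 2))) ≤ uniformCube ι {u | t ≤ ∑ i, hardTerm τ (u i)} :=
  (ofReal_le_uniformCube_softSum_ge hτ0 hτ1 ht).trans
    (uniformCube_softSum_ge_le_hardSum_ge hτ0 hτ1 t)

theorem uniformCube_hardSum_ge_le (hτ0 : 0 ≤ τ) (hτ1 : τ ≤ 1) {l : ℝ} (hl0 : 0 < l)
    (hl : l < 1 / 2) (t : ℝ) :
    uniformCube ι {u | t ≤ ∑ i, hardTerm τ (u i)} ≤
      ENNReal.ofReal ((1 + 1 / (1 - 2 * l)) ^ Fintype.card ι *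
        exp (-(l * (2 * Fintype.card ι * log τ))) * exp (-(l * t))) := by
  refine (uniformCube_hardSum_ge_le_softSum_ge hτ0 hτ1 t).trans
    ((uniformCube_softSum_ge_le hτ0 hτ1 hl0 hl _).trans_eq ?_)
  rw [mul_add, neg_add, exp_add, ← mul_assoc, mul_right_comm]

end TruncatedFisher

/-- Log-tail asymptotics of the null distributions of the truncated Fisher statistics:
for any `τ ∈ (0,1]`, both the hard-thresholded and the soft-thresholded truncated
Fisher statistics have null survival functions `G` satisfying `log G(t) / t → -1/2`. -/
theorem truncated_fisher_null_tail
    {K : ℕ} (hK : 1 ≤ K) (τ : ℝ) (hτ : τ ∈ Ioc (0 : ℝ) 1)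
    (Thard Tsoft : (Fin K → ℝ) → ℝ)
    (hThard : ∀ u : Fin K → ℝ, Thard u =
      ∑ i : Fin K, if u i ≤ τ then -2 * Real.log (u i) else 0)
    (hTsoft : ∀ u : Fin K → ℝ, Tsoft u =
      ∑ i : Fin K, max (-2 * Real.log (u i) + 2 * Real.log τ) 0)
    (Ghard Gsoft : ℝ → ℝ)
    (hGhard : ∀ t, Ghard t =
      ((Measure.pi fun _ : Fin K => volume.restrict (Icc (0 : ℝ) 1))
        {u | t ≤ Thard u}).toReal)
    (hGsoft : ∀ t, Gsoft t =
      ((Measure.pi fun _ : Fin K => volume.restrict (Icc (0 : ℝ) 1))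
        {u | t ≤ Tsoft u}).toReal) :
    Tendsto (fun t : ℝ => Real.log (Ghard t) / t) atTop (nhds (-(1 / 2))) ∧
    Tendsto (fun t : ℝ => Real.log (Gsoft t) / t) atTop (nhds (-(1 / 2))) := by
  open TruncatedFisher in
  obtain ⟨hτ0, hτ1⟩ := hτ
  have : Nonempty (Fin K) := ⟨⟨0, hK⟩⟩
  obtain rfl : Thard = fun u => ∑ i, hardTerm τ (u i) := funext hThard
  obtain rfl : Tsoft = fun u => ∑ i, softTerm τ (u i) := funext hTsoft
  obtain rfl := funext hGhard
  obtain rfl := funext hGsoft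
  refine ⟨tendsto_log_toReal_div_of_exp_bounds hτ0 one_half_pos ?_
      fun l hl => ⟨_, .of_forall (uniformCube_hardSum_ge_le hτ0.le hτ1 hl.1 hl.2)⟩,
    tendsto_log_toReal_div_of_exp_bounds hτ0 one_half_pos ?_
      fun l hl => ⟨_, .of_forall (uniformCube_softSum_ge_le hτ0.le hτ1 hl.1 hl.2)⟩⟩
  all_goals filter_upwards [eventually_ge_atTop 0] with t ht
  · rw [one_div_mul_eq_div]
    exact ofReal_le_uniformCube_hardSum_ge hτ0 hτ1 ht
  · rw [one_div_mul_eq_div]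
    exact ofReal_le_uniformCube_softSum_ge hτ0 hτ1 ht
end

section
/- Fix an integer K ≥ 1 and an integer ℓ with 1 ≤ ℓ ≤ K. Fix reals λ_1,…,λ_K > 0 and c_1,…,c_ℓ > 0, and set c_i = 0 for ℓ < i ≤ K. Fix sequences n_1,…,n_K : ℕ → ℕ with n_i(n)/n → λ_i as n → ∞. On a probability space, for each n let p_1^{(n)},…,p_K^{(n)} be random variables with values in (0,1) such that: (i) for each 1 ≤ i ≤ ℓ, −(2/n_i(n))·log p_i^{(n)} → c_i almost surely as n → ∞; (ii) for each ℓ < i ≤ K and every n, p_i^{(n)} is uniformly distributed on (0,1). Define the Cauchy combination statistic T_n = (1/K)·∑_{i=1}^K tan(π·(1/2 − p_i^{(n)})) and its combined p-value q_n = 1/2 − arctan(T_n)/π. Then −(2/n)·log q_n → max_{1≤i≤ℓ} λ_i·c_i almost surely as n → ∞; in particular, when ℓ ≥ 2 the Cauchy combination test is not asymptotically Bahadur optimal since max_{1≤i≤ℓ} λ_i c_i < ∑_{i=1}^ℓ λ_i c_i. -/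
open MeasureTheory Filter Set ProbabilityTheory

/-!
The map `x ↦ tan (π (1/2 - x)) = cot (π x)` sends a uniform p-value to a standard Cauchy
variable, and the Cauchy survival function `t ↦ 1/2 - arctan t / π` is its inverse. Since
`cot (π x) ≍ 1 / x` as `x → 0`, a p-value of exact slope `s` (so `log x ≈ -s n / 2`) gives a
summand of `T_n` growing at exponential rate `s / 2`, while by Borel–Cantelli the summands of the
uniform p-values are almost surely `O(exp (ε n))` for every `ε > 0`. A finite sum grows at the
largest of the rates of its summands, so `T_n` has rate `max λᵢ cᵢ / 2`, and `q_n ≍ 1 / T_n`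
has exact slope `max λᵢ cᵢ`: the Cauchy combination keeps only the strongest signal instead of
adding them up.
-/

open Real Topology

lemma Filter.Tendsto.div_trans {α : Type*} {l : Filter α} {f m d : α → ℝ} {c a : ℝ}
    (hf : Tendsto (fun n => f n / m n) l (𝓝 c)) (hm : Tendsto (fun n => m n / d n) l (𝓝 a))
    (ha : a ≠ 0) : Tendsto (fun n => f n / d n) l (𝓝 (a * c)) := by
  refine (hm.mul hf).congr' ?_
  filter_upwards [hm.eventually_ne ha] with n hn
  have : m n ≠ 0 := fun h => hn (by simp [h])
  field_simp

lemma tendsto_neg_two_div_mul_iff {α : Type*} {l : Filter α} {f d : α → ℝ} {s : ℝ} :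
    Tendsto (fun n => -(2 / d n) * f n) l (𝓝 s) ↔
      Tendsto (fun n => f n / d n) l (𝓝 (-(s / 2))) := by
  constructor <;> intro h
  · convert h.const_mul (-(1 / 2)) using 2 <;> ring
  · convert h.const_mul (-2) using 2 <;> ring

lemma eventually_const_mul_exp_le_exp {a b : ℝ} (hab : a < b) (C : ℝ) :
    ∀ᶠ n : ℕ in atTop, C * exp (n * a) ≤ exp (n * b) := by
  have h : Tendsto (fun n : ℕ => exp (n * (b - a))) atTop atTop :=
    tendsto_exp_atTop.comp (tendsto_natCast_atTop_atTop.atTop_mul_const (sub_pos.2 hab))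
  filter_upwards [h.eventually_ge_atTop C] with n hn
  calc C * exp (n * a) ≤ exp (n * (b - a)) * exp (n * a) := by gcongr
    _ = exp (n * b) := by rw [← exp_add]; ring_nf

def HasExpRate (x : ℕ → ℝ) (r : ℝ) : Prop :=
  (∀ᶠ n in atTop, 0 < x n) ∧ Tendsto (fun n => log (x n) / n) atTop (𝓝 r)

lemma hasExpRate_iff {x : ℕ → ℝ} {r : ℝ} :
    HasExpRate x r ↔ (∀ a < r, ∀ᶠ n : ℕ in atTop, exp (n * a) ≤ x n) ∧
      ∀ b > r, ∀ᶠ n : ℕ in atTop, x n ≤ exp (n * b) := by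
  constructor
  · rintro ⟨hpos, hlim⟩
    refine ⟨fun a ha => ?_, fun b hb => ?_⟩
    · filter_upwards [hpos, hlim.eventually_const_lt ha, eventually_gt_atTop 0] with n hx h hn
      rw [← le_log_iff_exp_le hx]
      rw [lt_div_iff₀ (Nat.cast_pos.2 hn)] at h
      linarith
    · filter_upwards [hpos, hlim.eventually_lt_const hb, eventually_gt_atTop 0] with n hx h hn
      rw [← log_le_iff_le_exp hx]
      rw [div_lt_iff₀ (Nat.cast_pos.2 hn)] at h
      linarith
  · rintro ⟨hlow, hup⟩
    have hpos : ∀ᶠ n in atTop, 0 < x n :=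
      (hlow (r - 1) (by linarith)).mono fun n h => (exp_pos _).trans_le h
    refine ⟨hpos, tendsto_order.2 ⟨fun a ha => ?_, fun b hb => ?_⟩⟩
    · filter_upwards [hpos, hlow ((a + r) / 2) (by linarith), eventually_gt_atTop 0]
        with n hx h hn
      have hn' : (0 : ℝ) < n := Nat.cast_pos.2 hn
      rw [lt_div_iff₀ hn']
      nlinarith [(le_log_iff_exp_le hx).2 h]
    · filter_upwards [hpos, hup ((r + b) / 2) (by linarith), eventually_gt_atTop 0]
        with n hx h hn
      have hn' : (0 : ℝ) < n := Nat.cast_pos.2 hn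
      rw [div_lt_iff₀ hn']
      nlinarith [(log_le_iff_le_exp hx).2 h]

namespace HasExpRate

variable {x y : ℕ → ℝ} {r : ℝ}

lemma congr_log (h : HasExpRate x r) (hy : ∀ᶠ n in atTop, 0 < y n) {C : ℝ}
    (hC : ∀ᶠ n in atTop, |log (y n) - log (x n)| ≤ C) : HasExpRate y r := by
  refine ⟨hy, ?_⟩
  have hsmall : Tendsto (fun n : ℕ => (log (y n) - log (x n)) / n) atTop (𝓝 0) := by
    refine squeeze_zero_norm' ?_ (tendsto_const_div_atTop_nhds_zero_nat C)
    filter_upwards [hC] with n hn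
    rw [norm_div, norm_eq_abs, Real.norm_natCast]
    exact div_le_div_of_nonneg_right hn n.cast_nonneg
  simpa only [← add_div, add_sub_cancel, add_zero] using h.2.add hsmall

lemma inv (h : HasExpRate x r) : HasExpRate (fun n => (x n)⁻¹) (-r) :=
  ⟨h.1.mono fun _ hn => inv_pos.2 hn, by simpa only [log_inv, neg_div] using h.2.neg⟩

lemma const_mul (h : HasExpRate x r) {c : ℝ} (hc : 0 < c) : HasExpRate (fun n => c * x n) r :=
  h.congr_log (h.1.mono fun _ hn => mul_pos hc hn) (C := |log c|) <| h.1.mono fun n hn => by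
    rw [log_mul hc.ne' hn.ne', add_sub_cancel_right]

lemma tendsto_zero (h : HasExpRate x r) (hr : r < 0) : Tendsto x atTop (𝓝 0) := by
  have hexp : Tendsto (fun n : ℕ => exp (n * (r / 2))) atTop (𝓝 0) :=
    tendsto_exp_atBot.comp (tendsto_natCast_atTop_atTop.atTop_mul_const_of_neg (by linarith))
  exact tendsto_of_tendsto_of_tendsto_of_le_of_le' tendsto_const_nhds hexp
    (h.1.mono fun _ hn => hn.le) ((hasExpRate_iff.1 h).2 _ (by linarith))

end HasExpRate

lemma hasExpRate_sum {ι : Type*} [Fintype ι] {g : ι → ℕ → ℝ} {r r' : ℝ} (hr' : r' < r)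
    {i₀ : ι} (h₀ : HasExpRate (g i₀) r)
    (hle : ∀ i, ∀ b > r, ∀ᶠ n : ℕ in atTop, g i n ≤ exp (n * b))
    (hge : ∀ i, ∀ᶠ n : ℕ in atTop, -exp (n * r') ≤ g i n) :
    HasExpRate (fun n => ∑ i, g i n) r := by
  refine hasExpRate_iff.2 ⟨fun a ha => ?_, fun b hb => ?_⟩
  · obtain ⟨a', ha'⟩ := exists_between (max_lt ha hr')
    filter_upwards [(hasExpRate_iff.1 h₀).1 a' ha'.2, eventually_all.2 hge,
      eventually_const_mul_exp_le_exp ((le_max_left a r').trans_lt ha'.1) 2,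
      eventually_const_mul_exp_le_exp ((le_max_right a r').trans_lt ha'.1)
        (2 * Fintype.card ι)] with n h₀n hgen ha hr'
    -- shifting every term by `exp (n r')` makes the terms nonnegative
    have hsingle : g i₀ n + exp (n * r') ≤ ∑ i, (g i n + exp (n * r')) :=
      Finset.single_le_sum (f := fun i => g i n + exp (n * r'))
        (fun i _ => by linarith [hgen i]) (Finset.mem_univ i₀)
    rw [Finset.sum_add_distrib, Finset.sum_const, Finset.card_univ, nsmul_eq_mul] at hsingle
    linarith [exp_pos (n * r')]
  · filter_upwards [eventually_all.2 fun i => hle i ((r + b) / 2) (by linarith),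
      eventually_const_mul_exp_le_exp (by linarith : (r + b) / 2 < b) (Fintype.card ι)]
      with n hlen h
    calc ∑ i, g i n ≤ ∑ _i : ι, exp (n * ((r + b) / 2)) :=
          Finset.sum_le_sum fun i _ => hlen i
      _ = Fintype.card ι * exp (n * ((r + b) / 2)) := by simp
      _ ≤ exp (n * b) := h

lemma tan_pi_mul_half_sub_mem_Icc {x : ℝ} (hx₀ : 0 < x) (hx : x ≤ 1 / 4) :
    tan (π * (1 / 2 - x)) ∈ Icc (2 * π * x)⁻¹ (π * x)⁻¹ := by
  have hθ : 0 < π * x := by positivity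
  have hθ' : π * x ≤ π / 4 := by nlinarith [pi_pos]
  have hcos : 1 / 2 ≤ cos (π * x) := by
    have := one_sub_mul_le_cos hθ.le (by linarith)
    rw [show 2 / π * (π * x) = 2 * x by field_simp] at this
    linarith
  have htan_le : tan (π * x) ≤ 2 * (π * x) := by
    rw [tan_eq_sin_div_cos, div_le_iff₀ (by linarith)]
    nlinarith [sin_le hθ.le]
  have hle_tan : π * x ≤ tan (π * x) := le_tan hθ.le (by linarith)
  rw [show π * (1 / 2 - x) = π / 2 - π * x by ring, tan_pi_div_two_sub, mul_assoc]
  exact ⟨inv_anti₀ (hθ.trans_le hle_tan) htan_le, inv_anti₀ hθ hle_tan⟩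

lemma abs_log_tan_pi_mul_half_sub_sub_log_inv_le {x : ℝ} (hx₀ : 0 < x) (hx : x ≤ 1 / 4) :
    |log (tan (π * (1 / 2 - x))) - log x⁻¹| ≤ log (2 * π) := by
  obtain ⟨hlo, hhi⟩ := tan_pi_mul_half_sub_mem_Icc hx₀ hx
  have hlog_lo := log_le_log (by positivity) hlo
  have hlog_hi := log_le_log ((inv_pos.2 (by positivity)).trans_le hlo) hhi
  simp only [log_inv, log_mul (by positivity : (2 : ℝ) * π ≠ 0) hx₀.ne',
    log_mul two_ne_zero pi_ne_zero, log_mul pi_ne_zero hx₀.ne'] at hlog_lo hlog_hi ⊢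
  have := log_pos one_lt_two
  have := log_pos (by linarith [pi_gt_three] : 1 < π)
  rw [abs_le]; constructor <;> linarith

lemma half_sub_arctan_div_pi_mem_Ioc {t : ℝ} (ht : 1 ≤ t) :
    1 / 2 - arctan t / π ∈ Ioc 0 (1 / 4) := by
  have h₁ : π / 4 ≤ arctan t := arctan_one ▸ arctan_strictMono.monotone ht
  have h₂ := arctan_lt_pi_div_two t
  constructor
  · rw [sub_pos, div_lt_iff₀ pi_pos]; linarith
  · rw [sub_le_comm, le_div_iff₀ pi_pos]; linarith

lemma tan_pi_mul_half_sub_half_sub_arctan_div_pi (t : ℝ) :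
    tan (π * (1 / 2 - (1 / 2 - arctan t / π))) = t := by
  rw [show π * (1 / 2 - (1 / 2 - arctan t / π)) = arctan t by field_simp; ring, tan_arctan]

lemma half_sub_arctan_div_pi_le_inv {t : ℝ} (ht : 1 ≤ t) :
    1 / 2 - arctan t / π ≤ t⁻¹ := by
  obtain ⟨ha₀, ha⟩ := half_sub_arctan_div_pi_mem_Ioc ht
  have h := (tan_pi_mul_half_sub_mem_Icc ha₀ ha).2
  rw [tan_pi_mul_half_sub_half_sub_arctan_div_pi] at h
  rw [le_inv_comm₀ ha₀ (by linarith)]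
  calc t ≤ (π * (1 / 2 - arctan t / π))⁻¹ := h
    _ ≤ (1 / 2 - arctan t / π)⁻¹ :=
      inv_anti₀ ha₀ (le_mul_of_one_le_left ha₀.le (by linarith [pi_gt_three]))

lemma volume_lt_abs_tan_pi_mul_half_sub_inter_Ioo_le (t : ℝ) :
    volume ({x | t < |tan (π * (1 / 2 - x))|} ∩ Ioo 0 1) ≤
      ENNReal.ofReal (2 * (1 / 2 - arctan t / π)) := by
  set a := 1 / 2 - arctan t / π with ha_def
  have ha : 0 ≤ a := by
    have := arctan_lt_pi_div_two t
    rw [sub_nonneg, div_le_iff₀ pi_pos]; linarith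
  have hsub : {x | t < |tan (π * (1 / 2 - x))|} ∩ Ioo 0 1 ⊆ Ioo 0 a ∪ Ioo (1 - a) 1 := by
    rintro x ⟨hx, hx₀, hx₁⟩
    have harctan : arctan (tan (π * (1 / 2 - x))) = π * (1 / 2 - x) :=
      arctan_tan (by nlinarith [pi_pos]) (by nlinarith [pi_pos])
    change t < |tan (π * (1 / 2 - x))| at hx
    rcases lt_abs.1 hx with h | h
    · have h' := arctan_strictMono h
      rw [harctan] at h'
      refine Or.inl ⟨hx₀, ?_⟩
      have : a - x = (π * (1 / 2 - x) - arctan t) / π := by rw [ha_def]; field_simp; ring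
      linarith [div_pos (sub_pos.2 h') pi_pos]
    · have h' := arctan_strictMono h
      rw [arctan_neg, harctan] at h'
      refine Or.inr ⟨?_, hx₁⟩
      have : x - (1 - a) = (-(π * (1 / 2 - x)) - arctan t) / π := by
        rw [ha_def]; field_simp; ring
      linarith [div_pos (sub_pos.2 h') pi_pos]
  calc volume ({x | t < |tan (π * (1 / 2 - x))|} ∩ Ioo 0 1)
      ≤ volume (Ioo 0 a ∪ Ioo (1 - a) 1) := measure_mono hsub
    _ ≤ volume (Ioo 0 a) + volume (Ioo (1 - a) 1) := measure_union_le _ _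
    _ = ENNReal.ofReal (2 * a) := by
      rw [Real.volume_Ioo, Real.volume_Ioo, ← ENNReal.ofReal_add] <;> ring_nf <;> linarith

section Uniform

variable {Ω : Type*} [MeasurableSpace Ω] {μ : Measure Ω}

lemma measure_lt_abs_tan_pi_mul_half_sub_le {X : Ω → ℝ}
    (hX : μ.map X = volume.restrict (Ioo 0 1)) (t : ℝ) :
    μ {ω | t < |tan (π * (1 / 2 - X ω))|} ≤ ENNReal.ofReal (2 * (1 / 2 - arctan t / π)) :=
  calc μ {ω | t < |tan (π * (1 / 2 - X ω))|}
      ≤ μ.map X {x | t < |tan (π * (1 / 2 - x))|} :=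
        Measure.le_map_apply (AEMeasurable.of_map_ne_zero (by simp [hX])) _
    _ = volume ({x | t < |tan (π * (1 / 2 - x))|} ∩ Ioo 0 1) := by
        rw [hX, Measure.restrict_apply' measurableSet_Ioo]
    _ ≤ _ := volume_lt_abs_tan_pi_mul_half_sub_inter_Ioo_le t

lemma ae_eventually_abs_tan_pi_mul_half_sub_le_exp {X : ℕ → Ω → ℝ}
    (hX : ∀ n, μ.map (X n) = volume.restrict (Ioo 0 1)) {ρ : ℝ} (hρ : 0 < ρ) :
    ∀ᵐ ω ∂μ, ∀ᶠ n : ℕ in atTop, |tan (π * (1 / 2 - X n ω))| ≤ exp (n * ρ) := by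
  have hbound : ∀ n : ℕ, μ {ω | exp (n * ρ) < |tan (π * (1 / 2 - X n ω))|} ≤
      ENNReal.ofReal (2 * exp (n * -ρ)) := fun n => by
    refine (measure_lt_abs_tan_pi_mul_half_sub_le (hX n) _).trans (ENNReal.ofReal_le_ofReal ?_)
    rw [mul_neg, exp_neg]
    gcongr
    exact half_sub_arctan_div_pi_le_inv (one_le_exp (by positivity))
  have hsum : ∑' n : ℕ, μ {ω | exp (n * ρ) < |tan (π * (1 / 2 - X n ω))|} ≠ ⊤ := by
    refine ne_top_of_le_ne_top ?_ (ENNReal.tsum_le_tsum hbound)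
    rw [← ENNReal.ofReal_tsum_of_nonneg (fun n => by positivity)
      ((summable_exp_nat_mul_iff.2 (neg_lt_zero.2 hρ)).mul_left 2)]
    exact ENNReal.ofReal_ne_top
  filter_upwards [ae_eventually_notMem hsum] with ω hω
  exact hω.mono fun n hn => not_lt.1 hn

end Uniform

namespace HasExpRate

variable {x : ℕ → ℝ} {r : ℝ}

lemma tan_pi_mul_half_sub (h : HasExpRate x r) (hr : r < 0) :
    HasExpRate (fun n => tan (π * (1 / 2 - x n))) (-r) := by
  have hsmall : ∀ᶠ n in atTop, 0 < x n ∧ x n ≤ 1 / 4 :=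
    h.1.and ((h.tendsto_zero hr).eventually (eventually_le_nhds (by norm_num)))
  refine h.inv.congr_log (hsmall.mono fun n hn => ?_)
    (hsmall.mono fun n hn => abs_log_tan_pi_mul_half_sub_sub_log_inv_le hn.1 hn.2)
  exact (inv_pos.2 (mul_pos (mul_pos two_pos pi_pos) hn.1)).trans_le
    (tan_pi_mul_half_sub_mem_Icc hn.1 hn.2).1

lemma half_sub_arctan_div_pi (h : HasExpRate x r) (hr : 0 < r) :
    HasExpRate (fun n => 1 / 2 - arctan (x n) / π) (-r) := by
  have hx : ∀ᶠ n in atTop, 1 ≤ x n := by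
    simpa only [mul_zero, exp_zero] using (hasExpRate_iff.1 h).1 0 hr
  have hq := hx.mono fun n hn => half_sub_arctan_div_pi_mem_Ioc hn
  have hinv : HasExpRate (fun n => (1 / 2 - arctan (x n) / π)⁻¹) r :=
    h.congr_log (hq.mono fun n hn => inv_pos.2 hn.1) <| hq.mono fun n hn => by
      have := abs_log_tan_pi_mul_half_sub_sub_log_inv_le hn.1 hn.2
      rwa [tan_pi_mul_half_sub_half_sub_arctan_div_pi, abs_sub_comm] at this
  simpa only [inv_inv] using hinv.inv

end HasExpRate

theorem hasExpRate_cauchy_combination {ι : Type*} [Fintype ι] {x : ℕ → ι → ℝ}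
    {w r r' : ℝ} (hw : 0 < w) (hr : 0 < r) (hr' : r' < r) {s : ι → ℝ} {i₀ : ι}
    (hs₀ : s i₀ = r) (hs : ∀ i, s i ≤ r)
    (hsignal : ∀ i, 0 < s i → HasExpRate (fun n => x n i) (-s i))
    (hnoise : ∀ i, s i ≤ 0 →
      ∀ᶠ n : ℕ in atTop, |tan (π * (1 / 2 - x n i))| ≤ exp (n * r')) :
    HasExpRate (fun n => 1 / 2 - arctan (w * ∑ i, tan (π * (1 / 2 - x n i))) / π) (-r) := by
  have hcot : ∀ i, 0 < s i → HasExpRate (fun n => tan (π * (1 / 2 - x n i))) (s i) :=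
    fun i hi => by simpa only [neg_neg] using (hsignal i hi).tan_pi_mul_half_sub (by linarith)
  refine ((hasExpRate_sum hr' (i₀ := i₀) ?_ (fun i b hb => ?_) (fun i => ?_)).const_mul
    hw).half_sub_arctan_div_pi hr
  · exact hs₀ ▸ hcot i₀ (hs₀ ▸ hr)
  · rcases lt_or_ge 0 (s i) with hi | hi
    · exact (hasExpRate_iff.1 (hcot i hi)).2 b (by linarith [hs i])
    · filter_upwards [hnoise i hi] with n hn
      exact (le_abs_self _).trans (hn.trans (exp_le_exp.2 (by gcongr; linarith)))
  · rcases lt_or_ge 0 (s i) with hi | hi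
    · filter_upwards [(hcot i hi).1] with n hn
      linarith [exp_pos (n * r')]
    · filter_upwards [hnoise i hi] with n hn
      linarith [neg_abs_le (tan (π * (1 / 2 - x n i)))]

theorem cauchy_combination_exact_slope_general
    {K : ℕ} (hK : 1 ≤ K) (ℓ : ℕ) (hℓ : 1 ≤ ℓ) (hℓK : ℓ ≤ K)
    (lam c : Fin K → ℝ)
    (hlam : ∀ i, 0 < lam i)
    (hcpos : ∀ i : Fin K, (i : ℕ) < ℓ → 0 < c i)
    (hcnull : ∀ i : Fin K, ℓ ≤ (i : ℕ) → c i = 0)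
    (nseq : Fin K → ℕ → ℕ)
    (hn : ∀ i, Tendsto (fun n : ℕ => (nseq i n : ℝ) / (n : ℝ)) atTop (nhds (lam i)))
    {Ω : Type*} [MeasurableSpace Ω] (μ : Measure Ω)
    (p : ℕ → Fin K → Ω → ℝ)
    (hval : ∀ n i ω, p n i ω ∈ Ioo (0 : ℝ) 1)
    (hslope : ∀ i : Fin K, (i : ℕ) < ℓ →
      ∀ᵐ ω ∂μ, Tendsto (fun n : ℕ => -(2 / (nseq i n : ℝ)) * Real.log (p n i ω))
        atTop (nhds (c i)))
    (hnull : ∀ i : Fin K, ℓ ≤ (i : ℕ) →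
      ∀ n, Measure.map (p n i) μ = volume.restrict (Ioo (0 : ℝ) 1))
    -- the Cauchy combination statistic and its combined p-value
    (T : ℕ → Ω → ℝ)
    (hT : ∀ n ω, T n ω =
      (1 / (K : ℝ)) * ∑ i : Fin K, Real.tan (Real.pi * (1 / 2 - p n i ω)))
    (q : ℕ → Ω → ℝ)
    (hq : ∀ n ω, q n ω = 1 / 2 - Real.arctan (T n ω) / Real.pi) :
    (∀ᵐ ω ∂μ, Tendsto (fun n : ℕ => -(2 / (n : ℝ)) * Real.log (q n ω))
      atTop (nhds (⨆ i : Fin ℓ, lam (Fin.castLE hℓK i) * c (Fin.castLE hℓK i)))) ∧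
    (2 ≤ ℓ →
      (⨆ i : Fin ℓ, lam (Fin.castLE hℓK i) * c (Fin.castLE hℓK i)) <
        ∑ i : Fin K, lam i * c i) := by
  have hsignal_pos : ∀ i : Fin K, (i : ℕ) < ℓ → 0 < lam i * c i :=
    fun i hi => mul_pos (hlam i) (hcpos i hi)
  have hnonneg : ∀ i : Fin K, 0 ≤ lam i * c i := fun i => by
    rcases lt_or_ge (i : ℕ) ℓ with hi | hi
    exacts [(hsignal_pos i hi).le, by simp [hcnull i hi]]
  have : Nonempty (Fin ℓ) := ⟨⟨0, hℓ⟩⟩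
  obtain ⟨j, hj⟩ := exists_eq_ciSup_of_finite
    (f := fun i : Fin ℓ => lam (Fin.castLE hℓK i) * c (Fin.castLE hℓK i))
  set M := ⨆ i : Fin ℓ, lam (Fin.castLE hℓK i) * c (Fin.castLE hℓK i)
  have hM : 0 < M := hj ▸ hsignal_pos _ j.isLt
  have hle_M : ∀ i : Fin K, lam i * c i ≤ M := fun i => by
    rcases lt_or_ge (i : ℕ) ℓ with hi | hi
    · exact le_ciSup (f := fun k : Fin ℓ => lam (Fin.castLE hℓK k) * c (Fin.castLE hℓK k))
        (Finite.bddAbove_range _) ⟨i, hi⟩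
    · simpa [hcnull i hi] using hM.le
  have hsignal_iff : ∀ i : Fin K, 0 < lam i * c i / 2 ↔ (i : ℕ) < ℓ := fun i =>
    (div_pos_iff_of_pos_right two_pos).trans
      ⟨fun h => lt_of_not_ge fun hi => by simp [hcnull i hi] at h, hsignal_pos i⟩
  refine ⟨?_, fun h2 => ?_⟩
  · filter_upwards [ae_all_iff.2 fun i => eventually_imp_distrib_left.2 (hslope i),
      ae_all_iff.2 fun i => eventually_imp_distrib_left.2 fun hi =>
        ae_eventually_abs_tan_pi_mul_half_sub_le_exp (hnull i hi) (half_pos (half_pos hM))]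
      with ω hsig hnoise
    simp only [hq, hT]
    refine tendsto_neg_two_div_mul_iff.2 (hasExpRate_cauchy_combination
      (s := fun i => lam i * c i / 2) (i₀ := Fin.castLE hℓK j)
      (one_div_pos.2 (Nat.cast_pos.2 hK)) (half_pos hM) (half_lt_self (half_pos hM))
      (by simp [hj]) (fun i => div_le_div_of_nonneg_right (hle_M i) two_pos.le)
      (fun i hi => ⟨.of_forall fun n => (hval n i ω).1, ?_⟩)
      (fun i hi => hnoise i (not_lt.1 fun h => hi.not_gt ((hsignal_iff i).2 h)))).2
    convert (tendsto_neg_two_div_mul_iff.1 (hsig i ((hsignal_iff i).1 hi))).div_trans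
      (hn i) (hlam i).ne' using 2
    ring
  · have : Nontrivial (Fin ℓ) := Fin.nontrivial_iff_two_le.2 h2
    obtain ⟨j', hj'⟩ := exists_ne j
    rw [← hj]
    exact Finset.single_lt_sum (f := fun i => lam i * c i)
      (fun h => hj' (Fin.castLE_injective hℓK h)) (Finset.mem_univ _) (Finset.mem_univ _)
      (hsignal_pos _ j'.isLt) fun i _ _ => hnonneg i

/-- The Cauchy combination test has exact slope `max_{i ≤ ℓ} λ i * c i`; in particular,
when `ℓ ≥ 2` it is not asymptotically Bahadur optimal since
`max_{i ≤ ℓ} λ i c i < ∑ λ i c i`. -/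
theorem cauchy_combination_exact_slope
    {K : ℕ} (hK : 1 ≤ K) (ℓ : ℕ) (hℓ : 1 ≤ ℓ) (hℓK : ℓ ≤ K)
    (lam c : Fin K → ℝ)
    (hlam : ∀ i, 0 < lam i)
    (hcpos : ∀ i : Fin K, (i : ℕ) < ℓ → 0 < c i)
    (hcnull : ∀ i : Fin K, ℓ ≤ (i : ℕ) → c i = 0)
    (nseq : Fin K → ℕ → ℕ)
    (hn : ∀ i, Tendsto (fun n : ℕ => (nseq i n : ℝ) / (n : ℝ)) atTop (nhds (lam i)))
    {Ω : Type*} [MeasurableSpace Ω] (μ : Measure Ω) [IsProbabilityMeasure μ]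
    (p : ℕ → Fin K → Ω → ℝ)
    (hmeas : ∀ n i, Measurable (p n i))
    (hval : ∀ n i ω, p n i ω ∈ Ioo (0 : ℝ) 1)
    (hslope : ∀ i : Fin K, (i : ℕ) < ℓ →
      ∀ᵐ ω ∂μ, Tendsto (fun n : ℕ => -(2 / (nseq i n : ℝ)) * Real.log (p n i ω))
        atTop (nhds (c i)))
    (hnull : ∀ i : Fin K, ℓ ≤ (i : ℕ) →
      ∀ n, Measure.map (p n i) μ = volume.restrict (Ioo (0 : ℝ) 1))
    -- the Cauchy combination statistic and its combined p-value
    (T : ℕ → Ω → ℝ)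
    (hT : ∀ n ω, T n ω =
      (1 / (K : ℝ)) * ∑ i : Fin K, Real.tan (Real.pi * (1 / 2 - p n i ω)))
    (q : ℕ → Ω → ℝ)
    (hq : ∀ n ω, q n ω = 1 / 2 - Real.arctan (T n ω) / Real.pi) :
    (∀ᵐ ω ∂μ, Tendsto (fun n : ℕ => -(2 / (n : ℝ)) * Real.log (q n ω))
      atTop (nhds (⨆ i : Fin ℓ, lam (Fin.castLE hℓK i) * c (Fin.castLE hℓK i)))) ∧
    (2 ≤ ℓ →
      (⨆ i : Fin ℓ, lam (Fin.castLE hℓK i) * c (Fin.castLE hℓK i)) <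
        ∑ i : Fin K, lam i * c i) :=
  cauchy_combination_exact_slope_general hK ℓ hℓ hℓK lam c hlam hcpos hcnull nseq hn μ p hval hslope
    hnull T hT q hq
end
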